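/- arXiv:1409.7542 — 2 statements merged into one kernel-verified Lean document; each statement's English description precedes it below -/
import Mathlib

section
/- Let A be a thin concurrent game with symmetry presented as a span l_A, r_A : Ã → A. Then (CC_Ã, CC_{l_A}, CC_{r_A}) is a symmetry on CC_A, making CC_A an essp CC_𝒜, and the copycat map cc_𝒜 : CC_𝒜 → 𝒜^⊥ ∥ 𝒜 (the identity on events, with the symmetry Ã^⊥ ∥ Ã on the codomain) is a ∼-strategy: it preserves symmetry, is courteous, strong-receptive, and CC_𝒜 is thin (i.e. CC_{l_A} reflects positive compatibility: if x ∈ C(CC_Ã) has extensions x ⊆⁺ x₁ and x ⊆⁺ x₂ in C(CC_Ã) with CC_{l_A}(x₁) ∪ CC_{l_A}(x₂) ∈ C(CC_A), then x₁ ∪ x₂ ∈ C(CC_Ã)). -/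
set_option autoImplicit false
set_option maxHeartbeats 1000000

universe u

/-- An event structure. -/
structure ES (E : Type u) where
  le : E → E → Prop
  le_refl : ∀ e, le e e
  le_trans : ∀ {a b c}, le a b → le b c → le a c
  le_antisymm : ∀ {a b}, le a b → le b a → a = b
  Con : Set (Set E)
  con_empty : (∅ : Set E) ∈ Con
  causes_finite : ∀ e, {e' | le e' e}.Finite
  con_finite : ∀ X ∈ Con, Set.Finite X
  con_singleton : ∀ e, ({e} : Set E) ∈ Con
  con_mono : ∀ {X Y : Set E}, Y ⊆ X → X ∈ Con → Y ∈ Con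
  con_extend : ∀ {X : Set E} {e e' : E}, X ∈ Con → le e e' → e' ∈ X → X ∪ {e} ∈ Con

variable {E F G H : Type u}

/-- Configurations: finite (via `Con`), consistent, down-closed subsets. -/
def Config (A : ES E) (x : Set E) : Prop :=
  x ∈ A.Con ∧ ∀ ⦃e : E⦄, e ∈ x → ∀ ⦃e' : E⦄, A.le e' e → e' ∈ x

/-- Covering: `x —⊂ e`. -/
def Cov (A : ES E) (x : Set E) (e : E) : Prop :=
  Config A x ∧ e ∉ x ∧ Config A (insert e x)

def ESlt (A : ES E) (e e' : E) : Prop := A.le e e' ∧ e ≠ e'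

/-- Immediate causality `e ⋖ e'`. -/
def Imm (A : ES E) (e e' : E) : Prop :=
  ESlt A e e' ∧ ∀ e'', ESlt A e e'' → ESlt A e'' e' → False

/-- Total maps of event structures. -/
def IsMap (A : ES E) (B : ES F) (f : E → F) : Prop :=
  (∀ x, Config A x → Config B (f '' x)) ∧
  (∀ x, Config A x → ∀ e ∈ x, ∀ e' ∈ x, f e = f e' → e = e')

def Rigid (A : ES E) (B : ES F) (f : E → F) : Prop :=
  IsMap A B f ∧ ∀ e e', A.le e e' → B.le (f e) (f e')

def OpenMap (A : ES E) (B : ES F) (f : E → F) : Prop :=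
  Rigid A B f ∧ ∀ x y, Config A x → Config B y → f '' x ⊆ y →
    ∃ x', Config A x' ∧ x ⊆ x' ∧ f '' x' = y

def ConflictFree (A : ES E) : Prop := ∀ X : Set E, X.Finite → X ∈ A.Con

def IsMinimal (A : ES E) (e : E) : Prop := ∀ e', A.le e' e → e' = e

/-- Event structures with polarities; `true` is Player/positive, `false` is Opponent/negative. -/
structure ESP (E : Type u) extends ES E where
  pol : E → Bool

def ESP.dual (A : ESP E) : ESP E := { toES := A.toES, pol := fun e => !A.pol e }

def IsESPMap (A : ESP E) (B : ESP F) (f : E → F) : Prop :=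
  IsMap A.toES B.toES f ∧ ∀ e, B.pol (f e) = A.pol e

def NegativeESP (A : ESP E) : Prop := ∀ e, IsMinimal A.toES e → A.pol e = false

/-- Single-threaded event structures. -/
def SingleThreaded (A : ES E) : Prop :=
  (∀ e, ∃! m, A.le m e ∧ IsMinimal A m) ∧
  (∀ x e₁ e₂, Cov A x e₁ → Cov A x e₂ → ¬ Config A (insert e₁ (insert e₂ x)) →
    ∃ m, A.le m e₁ ∧ A.le m e₂)

/- ## Relations as bijections between configurations -/

abbrev Rel2 (E : Type u) := Set (E × E)

def rdom (θ : Rel2 E) : Set E := Prod.fst '' θ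
def rran (θ : Rel2 E) : Set E := Prod.snd '' θ
def relBij (θ : Rel2 E) : Prop := ∀ p ∈ θ, ∀ q ∈ θ, (p.1 = q.1 ↔ p.2 = q.2)
def relId (x : Set E) : Rel2 E := (fun e => (e, e)) '' x
def relInv (θ : Rel2 E) : Rel2 E := Prod.swap '' θ
def relComp (θ θ' : Rel2 E) : Rel2 E := {p | ∃ b, (p.1, b) ∈ θ ∧ (b, p.2) ∈ θ'}
def relRestrict (θ : Rel2 E) (x : Set E) : Rel2 E := {p ∈ θ | p.1 ∈ x}
def relMap (f : E → F) (θ : Rel2 E) : Rel2 F := (Prod.map f f) '' θ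

/-- Isomorphism families (without the polarity requirement). -/
def IsIsoFamily (A : ES E) (S : Set (Rel2 E)) : Prop :=
  (∀ θ ∈ S, relBij θ ∧ Config A (rdom θ) ∧ Config A (rran θ)) ∧
  (∀ x, Config A x → relId x ∈ S) ∧
  (∀ θ ∈ S, relInv θ ∈ S) ∧
  (∀ θ ∈ S, ∀ θ' ∈ S, rran θ = rdom θ' → relComp θ θ' ∈ S) ∧
  (∀ θ ∈ S, ∀ x, Config A x → x ⊆ rdom θ → relRestrict θ x ∈ S) ∧
  (∀ θ ∈ S, ∀ x', Config A x' → rdom θ ⊆ x' → ∃ θ' ∈ S, θ ⊆ θ' ∧ rdom θ' = x')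

/-- The members of the family are polarity-preserving. -/
def PolPres (A : ESP E) (S : Set (Rel2 E)) : Prop :=
  ∀ θ ∈ S, ∀ p ∈ θ, A.pol p.1 = A.pol p.2

def FamPres (SA : Set (Rel2 E)) (SB : Set (Rel2 F)) (f : E → F) : Prop :=
  ∀ θ ∈ SA, relMap f θ ∈ SB

/-- `f ∼ g` : the two maps are symmetric. -/
def SymMaps (A : ES E) (SB : Set (Rel2 F)) (f g : E → F) : Prop :=
  ∀ x, Config A x → {p : F × F | ∃ a ∈ x, p = (f a, g a)} ∈ SB

/-- `θ ⊆⁺ θ'`. -/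
def PosRelExt (A : ESP E) (θ θ' : Rel2 E) : Prop :=
  θ ⊆ θ' ∧ ∀ p ∈ θ', p ∉ θ → A.pol p.1 = true ∧ A.pol p.2 = true

/-- `θ ⊆⁻ θ'`. -/
def NegRelExt (A : ESP E) (θ θ' : Rel2 E) : Prop :=
  θ ⊆ θ' ∧ ∀ p ∈ θ', p ∉ θ → A.pol p.1 = false ∧ A.pol p.2 = false

/-- `x ⊆⁺ x'` for configurations. -/
def PosSetExt (A : ESP E) (x x' : Set E) : Prop :=
  x ⊆ x' ∧ ∀ e ∈ x', e ∉ x → A.pol e = true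

def Courteous (S : ESP E) (A : ESP F) (σ : E → F) : Prop :=
  ∀ s₁ s₂, Imm S.toES s₁ s₂ → (S.pol s₁ = true ∨ S.pol s₂ = false) →
    Imm A.toES (σ s₁) (σ s₂)

def Receptive (S : ESP E) (A : ESP F) (σ : E → F) : Prop :=
  ∀ x a, Config S.toES x → Cov A.toES (σ '' x) a → A.pol a = false →
    ∃! s, Cov S.toES x s ∧ σ s = a

def StrongReceptive (S : ESP E) (SS : Set (Rel2 E)) (A : ESP F) (SA : Set (Rel2 F))
    (σ : E → F) : Prop :=
  ∀ θ ∈ SS, ∀ a₁ a₂ : F, A.pol a₁ = false → A.pol a₂ = false →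
    (a₁, a₂) ∉ relMap σ θ → insert (a₁, a₂) (relMap σ θ) ∈ SA →
    ∃! st : E × E, insert st θ ∈ SS ∧ σ st.1 = a₁ ∧ σ st.2 = a₂

/-- Thin: two positive compatible extensions of a member of the family are compatible. -/
def ThinFam (A : ESP E) (S : Set (Rel2 E)) : Prop :=
  ∀ θ ∈ S, ∀ θ₁ ∈ S, ∀ θ₂ ∈ S, PosRelExt A θ θ₁ → PosRelExt A θ θ₂ →
    Config A.toES (rdom θ₁ ∪ rdom θ₂) → θ₁ ∪ θ₂ ∈ S

/-- Race-preserving essp (family-level). -/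
def RacePresFam (A : ESP E) (S : Set (Rel2 E)) : Prop :=
  ∀ θ ∈ S, ∀ θ₁ ∈ S, ∀ θ₂ ∈ S, PosRelExt A θ θ₁ → NegRelExt A θ θ₂ →
    Config A.toES (rdom θ₁ ∪ rdom θ₂) → θ₁ ∪ θ₂ ∈ S

/-- Existence of receptive thin sub-symmetries of `A` and of `A^⊥`. -/
def HasThinReceptiveSubs (A : ESP E) (SA : Set (Rel2 E)) : Prop :=
  (∃ Sp ⊆ SA, IsIsoFamily A.toES Sp ∧
    (∀ θ ∈ Sp, ∀ θ' ∈ SA, NegRelExt A θ θ' → θ' ∈ Sp) ∧ ThinFam A Sp) ∧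
  (∃ Sm ⊆ SA, IsIsoFamily A.toES Sm ∧
    (∀ θ ∈ Sm, ∀ θ' ∈ SA, NegRelExt A.dual θ θ' → θ' ∈ Sm) ∧ ThinFam A.dual Sm)

/-- Thin concurrent games (family-level presentation). -/
def IsTCG (A : ESP E) (SA : Set (Rel2 E)) : Prop :=
  IsIsoFamily A.toES SA ∧ PolPres A SA ∧ RacePresFam A SA ∧ HasThinReceptiveSubs A SA

/-- ∼-strategies. -/
def IsSimStrategy (S : ESP E) (SS : Set (Rel2 E)) (A : ESP F) (SA : Set (Rel2 F))
    (σ : E → F) : Prop :=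
  IsESPMap S A σ ∧ FamPres SS SA σ ∧ IsIsoFamily S.toES SS ∧ PolPres S SS ∧
  Courteous S A σ ∧ StrongReceptive S SS A SA σ ∧ ThinFam S SS

/-- Weak equivalence of ∼-strategies on a common essp. -/
def WeakEquiv {S T GE : Type u} (PS : ESP S) (SS : Set (Rel2 S)) (PT : ESP T)
    (ST : Set (Rel2 T)) (SG : Set (Rel2 GE)) (σ : S → GE) (τ : T → GE) : Prop :=
  ∃ f : S → T, ∃ g : T → S,
    IsESPMap PS PT f ∧ FamPres SS ST f ∧ IsESPMap PT PS g ∧ FamPres ST SS g ∧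
    SymMaps PT.toES ST (f ∘ g) id ∧ SymMaps PS.toES SS (g ∘ f) id ∧
    SymMaps PS.toES SG (τ ∘ f) σ ∧ SymMaps PT.toES SG (σ ∘ g) τ

/- ## Stable families, primes, products, pullbacks -/

def FamLe (Fam : Set (Set E)) (x : Set E) (e e' : E) : Prop :=
  ∀ y ∈ Fam, y ⊆ x → e' ∈ y → e ∈ y

def FamPrime (Fam : Set (Set E)) (x : Set E) (e : E) : Set E :=
  {e' ∈ x | FamLe Fam x e' e}

def IsPrime (Fam : Set (Set E)) (p : Set E) : Prop :=
  ∃ x ∈ Fam, ∃ e ∈ x, p = FamPrime Fam x e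

/-- `e` is the generating (top) event of the prime `p`. -/
def PrRep (Fam : Set (Set E)) (p : Set E) (e : E) : Prop :=
  ∃ x ∈ Fam, e ∈ x ∧ p = FamPrime Fam x e

def PrimeLt (p q : Set E) : Prop := p ⊆ q ∧ p ≠ q

/-- Immediate causality in `Pr(Fam)`. -/
def PrImm (Fam : Set (Set E)) (p q : Set E) : Prop :=
  IsPrime Fam p ∧ IsPrime Fam q ∧ PrimeLt p q ∧
  ∀ r, IsPrime Fam r → PrimeLt p r → PrimeLt r q → False

/-- Configurations of `Pr(Fam)`. -/
def PrConfig (Fam : Set (Set E)) (z : Set (Set E)) : Prop :=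
  z.Finite ∧ (∀ p ∈ z, IsPrime Fam p) ∧
  (∀ p ∈ z, ∀ q, IsPrime Fam q → q ⊆ p → q ∈ z) ∧ ⋃₀ z ∈ Fam

/-- The product stable family `C(A) × C(B)`. -/
def ProdFam (A : ES E) (B : ES F) : Set (Set (E × F)) :=
  {x | x.Finite ∧ Config A (Prod.fst '' x) ∧ Config B (Prod.snd '' x) ∧
    (∀ p ∈ x, ∀ q ∈ x, p.1 = q.1 → p = q) ∧
    (∀ p ∈ x, ∀ q ∈ x, p.2 = q.2 → p = q) ∧
    (∀ p ∈ x, ∀ q ∈ x, p ≠ q → ∃ y ⊆ x,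
      Config A (Prod.fst '' y) ∧ Config B (Prod.snd '' y) ∧ (p ∈ y ↔ q ∉ y))}

/-- The stable family `(C(A) × C(B)) ↾ R` defining the pullback `A ⊛ B` of `f` and `g`. -/
def PbFam (A : ES E) (B : ES F) (f : E → G) (g : F → G) : Set (Set (E × F)) :=
  {x | x ∈ ProdFam A B ∧ ∀ p ∈ x, f p.1 = g p.2}

/- ## Secured bijections -/

def SecStep (A : ES E) (B : ES F) (θ : Set (E × F)) (p q : E × F) : Prop :=
  p ∈ θ ∧ q ∈ θ ∧ (A.le p.1 q.1 ∨ B.le p.2 q.2)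

def SecuredBij (A : ES E) (B : ES F) (f : E → G) (g : F → G) (θ : Set (E × F)) : Prop :=
  Config A (Prod.fst '' θ) ∧ Config B (Prod.snd '' θ) ∧
  (∀ p ∈ θ, ∀ q ∈ θ, (p.1 = q.1 ↔ p.2 = q.2)) ∧
  (∀ p ∈ θ, f p.1 = g p.2) ∧
  (∀ p q, Relation.TransGen (SecStep A B θ) p q → Relation.TransGen (SecStep A B θ) q p → p = q)

/- ## Parallel composition -/

def IsParES (A : ES E) (B : ES F) (P : ES (E ⊕ F)) : Prop :=
  (∀ e e', P.le e e' ↔ Sum.LiftRel A.le B.le e e') ∧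
  (∀ X, X ∈ P.Con ↔ X.Finite ∧ (Sum.inl ⁻¹' X) ∈ A.Con ∧ (Sum.inr ⁻¹' X) ∈ B.Con)

def IsParESP (A : ESP E) (B : ESP F) (P : ESP (E ⊕ F)) : Prop :=
  IsParES A.toES B.toES P.toES ∧
  (∀ a, P.pol (Sum.inl a) = A.pol a) ∧ (∀ b, P.pol (Sum.inr b) = B.pol b)

def parFam (SA : Set (Rel2 E)) (SB : Set (Rel2 F)) : Set (Rel2 (E ⊕ F)) :=
  {θ | ∃ θA ∈ SA, ∃ θB ∈ SB, θ = relMap Sum.inl θA ∪ relMap Sum.inr θB}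

/- ## Copycat -/

def ccPol (A : ESP E) (p : Bool × E) : Bool := cond p.1 (A.pol p.2) (!A.pol p.2)

def ccBase (A : ESP E) (p q : Bool × E) : Prop :=
  (p.1 = q.1 ∧ A.le p.2 q.2) ∨ (p.2 = q.2 ∧ p.1 ≠ q.1 ∧ ccPol A q = true)

def ccLe (A : ESP E) : Bool × E → Bool × E → Prop := Relation.ReflTransGen (ccBase A)

def ccDcl (A : ESP E) (X : Set (Bool × E)) : Set (Bool × E) := {p | ∃ q ∈ X, ccLe A p q}

def IsCopycatOf (A : ESP E) (CA : ESP (Bool × E)) : Prop :=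
  (∀ p q, CA.le p q ↔ ccLe A p q) ∧
  (∀ X, X ∈ CA.Con ↔ X.Finite ∧
    {a | (false, a) ∈ ccDcl A X} ∈ A.Con ∧ {a | (true, a) ∈ ccDcl A X} ∈ A.Con) ∧
  (∀ p, CA.pol p = ccPol A p)

def ccMap (f : E → F) : Bool × E → Bool × F := Prod.map id f

def ccToGame : Bool × E → E ⊕ E := fun p => cond p.1 (Sum.inr p.2) (Sum.inl p.2)

/- ## Symmetry presented as spans -/

def famOf (Et : ES F) (l r : F → E) : Set (Rel2 E) :=
  {θ | ∃ x, Config Et x ∧ θ = {p | ∃ aa ∈ x, p = (l aa, r aa)}}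

def IsSymSpanES (A : ES E) (Et : ES F) (l r : F → E) : Prop :=
  OpenMap Et A l ∧ OpenMap Et A r ∧
  (∀ aa aa', l aa = l aa' → r aa = r aa' → aa = aa') ∧
  (∀ x, Config A x → relId x ∈ famOf Et l r) ∧
  (∀ θ ∈ famOf Et l r, relInv θ ∈ famOf Et l r) ∧
  (∀ θ ∈ famOf Et l r, ∀ θ' ∈ famOf Et l r, rran θ = rdom θ' → relComp θ θ' ∈ famOf Et l r)

def IsSymSpanESP (A : ESP E) (Et : ESP F) (l r : F → E) : Prop :=
  IsSymSpanES A.toES Et.toES l r ∧ IsESPMap Et A l ∧ IsESPMap Et A r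

def MapPresRaces (S : ESP E) (A : ESP F) (f : E → F) : Prop :=
  ∀ x e₁ e₂, Cov S.toES x e₁ → Cov S.toES x e₂ →
    S.pol e₁ = false → S.pol e₂ = true →
    ¬ Config S.toES (insert e₁ (insert e₂ x)) →
    ¬ Config A.toES (insert (f e₁) (insert (f e₂) (f '' x)))

def ReflPosCompat (St : ESP F) (S : ES E) (l : F → E) : Prop :=
  ∀ x x₁ x₂, Config St.toES x → Config St.toES x₁ → Config St.toES x₂ →
    x ⊆ x₁ → x ⊆ x₂ →
    (∀ e ∈ x₁, e ∉ x → St.pol e = true) → (∀ e ∈ x₂, e ∉ x → St.pol e = true) →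
    Config S (l '' x₁ ∪ l '' x₂) → Config St.toES (x₁ ∪ x₂)

/- ## Higher symmetry -/

/-- The higher isomorphism family of an essp given by its family `SA`, at the level of
pairs of events: members correspond to commuting squares `φ' ∘ θ = θ' ∘ φ`. -/
def HigherFam (SA : Set (Rel2 E)) : Set (Rel2 (E × E)) :=
  {Φ | ∃ θ ∈ SA, ∃ θ' ∈ SA, ∃ φ ∈ SA, ∃ φ' ∈ SA,
    rdom φ = rdom θ ∧ rdom φ' = rran θ ∧ rran φ = rdom θ' ∧ rran φ' = rran θ' ∧
    (∀ a b c d, (a, b) ∈ θ → (a, c) ∈ φ → (b, d) ∈ φ' → (c, d) ∈ θ') ∧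
    Φ = {P | ∃ a b c d, (a, b) ∈ θ ∧ (a, c) ∈ φ ∧ (b, d) ∈ φ' ∧ P = ((a, b), (c, d))}}

/-- The higher isomorphism family, transported to the events of `Ã = Pr(SA)`,
i.e. primes of the stable family `SA`. -/
def LiftFam (SA : Set (Rel2 E)) : Set (Rel2 {p : Rel2 E // IsPrime SA p}) :=
  {Θ | ∃ θ ∈ SA, ∃ θ' ∈ SA, ∃ φ ∈ SA, ∃ φ' ∈ SA,
    rdom φ = rdom θ ∧ rdom φ' = rran θ ∧ rran φ = rdom θ' ∧ rran φ' = rran θ' ∧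
    (∀ a b c d, (a, b) ∈ θ → (a, c) ∈ φ → (b, d) ∈ φ' → (c, d) ∈ θ') ∧
    Θ = {P | ∃ a b c d, (a, b) ∈ θ ∧ (a, c) ∈ φ ∧ (b, d) ∈ φ' ∧
          P.1.1 = FamPrime SA θ (a, b) ∧ P.2.1 = FamPrime SA θ' (c, d)}}

/- ## Pullbacks as universal properties -/

def IsPullbackES {A B C P : Type u} (EP : ES P) (EA : ES A) (EB : ES B) (EC : ES C)
    (Pi1 : P → A) (Pi2 : P → B) (f : A → C) (g : B → C) : Prop :=
  IsMap EP EA Pi1 ∧ IsMap EP EB Pi2 ∧ f ∘ Pi1 = g ∘ Pi2 ∧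
  ∀ {X : Type u} (EX : ES X) (h₁ : X → A) (h₂ : X → B),
    IsMap EX EA h₁ → IsMap EX EB h₂ → f ∘ h₁ = g ∘ h₂ →
    ∃! h : X → P, IsMap EX EP h ∧ Pi1 ∘ h = h₁ ∧ Pi2 ∘ h = h₂

def IsPullbackESP {A B C P : Type u} (EP : ESP P) (EA : ESP A) (EB : ESP B) (EC : ESP C)
    (Pi1 : P → A) (Pi2 : P → B) (f : A → C) (g : B → C) : Prop :=
  IsESPMap EP EA Pi1 ∧ IsESPMap EP EB Pi2 ∧ f ∘ Pi1 = g ∘ Pi2 ∧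
  ∀ {X : Type u} (EX : ESP X) (h₁ : X → A) (h₂ : X → B),
    IsESPMap EX EA h₁ → IsESPMap EX EB h₂ → f ∘ h₁ = g ∘ h₂ →
    ∃! h : X → P, IsESPMap EX EP h ∧ Pi1 ∘ h = h₁ ∧ Pi2 ∘ h = h₂

/- ## Composition of strategies -/

def compLeft {S GA GB GC : Type u} (σ : S → GA ⊕ GB) : S ⊕ GC → (GA ⊕ GB) ⊕ GC :=
  Sum.map σ id

def compRight {T GA GB GC : Type u} (τ : T → GB ⊕ GC) : GA ⊕ T → (GA ⊕ GB) ⊕ GC :=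
  Sum.elim (fun a => Sum.inl (Sum.inl a))
    (fun t => Sum.elim (fun b => Sum.inl (Sum.inr b)) (fun c => Sum.inr c) (τ t))

def outAC {A B C : Type u} : (A ⊕ B) ⊕ C → Option (A ⊕ C) :=
  Sum.elim (Sum.elim (fun a => some (Sum.inl a)) (fun _ => none)) (fun c => some (Sum.inr c))

/-- Visible events of the interaction. -/
def VisE {S T GA GB GC : Type u} (σ : S → GA ⊕ GB) (e : (S ⊕ GC) × (GA ⊕ T)) : Prop :=
  (outAC (compLeft σ e.1)).isSome = true

/-- Visible primes of the interaction. -/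
def VisP {S T GA GB GC : Type u} (Fam : Set (Set ((S ⊕ GC) × (GA ⊕ T))))
    (σ : S → GA ⊕ GB) (p : Set ((S ⊕ GC) × (GA ⊕ T))) : Prop :=
  ∃ e, PrRep Fam p e ∧ VisE σ e

/-- The underlying relation of a bijection between configurations of `Pr(Fam)`. -/
def relUnder {P : Type u} (Fam : Set (Set P)) (Θ : Rel2 (Set P)) :
    Rel2 P :=
  {ee | ∃ pq ∈ Θ, PrRep Fam pq.1 ee.1 ∧ PrRep Fam pq.2 ee.2}

/-- The isomorphism family of the pullback `Pr(Fam)` of two ∼-strategies,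
characterised via the projections. -/
def PbSymFam {A B : Type u} (Fam : Set (Set (A × B))) (S1 : Set (Rel2 A))
    (S2 : Set (Rel2 B)) : Set (Rel2 (Set (A × B))) :=
  {Θ | relBij Θ ∧ PrConfig Fam (rdom Θ) ∧ PrConfig Fam (rran Θ) ∧
    relMap Prod.fst (relUnder Fam Θ) ∈ S1 ∧ relMap Prod.snd (relUnder Fam Θ) ∈ S2}

/-- A witness for the concrete composition `τ ⊙ σ` of strategies. -/
structure CompWitness {S T GA GB GC : Type u} (PS : ESP S) (PT : ESP T)
    (PA : ESP GA) (PC : ESP GC) (σ : S → GA ⊕ GB) (τ : T → GB ⊕ GC) where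
  L : ES (S ⊕ GC)
  R : ES (GA ⊕ T)
  hL : IsParES PS.toES PC.toES L
  hR : IsParES PA.toES PT.toES R
  Comp : ESP {p : Set ((S ⊕ GC) × (GA ⊕ T)) //
    VisP (PbFam L R (compLeft σ) (compRight τ)) σ p}
  hle : ∀ p q, Comp.le p q ↔ p.1 ⊆ q.1
  hcon : ∀ X, X ∈ Comp.Con ↔
    X.Finite ∧ ⋃₀ (Subtype.val '' X) ∈ PbFam L R (compLeft σ) (compRight τ)
  co : {p : Set ((S ⊕ GC) × (GA ⊕ T)) //
    VisP (PbFam L R (compLeft σ) (compRight τ)) σ p} → GA ⊕ GC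
  hco : ∀ p e, PrRep (PbFam L R (compLeft σ) (compRight τ)) p.1 e →
    outAC (compLeft σ e.1) = some (co p)
  hpol : ∀ p, Comp.pol p = Sum.elim (fun a => !PA.pol a) (fun c => PC.pol c) (co p)

/-- The isomorphism family of the composition: restriction to visible primes of the
family of the interaction. -/
def cfam {S T GA GB GC : Type u} {PS : ESP S} {PT : ESP T} {PA : ESP GA} {PC : ESP GC}
    {σ : S → GA ⊕ GB} {τ : T → GB ⊕ GC}
    (SS : Set (Rel2 S)) (ST : Set (Rel2 T)) (SA : Set (Rel2 GA)) (SC : Set (Rel2 GC))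
    (w : CompWitness PS PT PA PC σ τ) :
    Set (Rel2 {p : Set ((S ⊕ GC) × (GA ⊕ T)) //
      VisP (PbFam w.L w.R (compLeft σ) (compRight τ)) σ p}) :=
  {Θ | ∃ Φ ∈ PbSymFam (PbFam w.L w.R (compLeft σ) (compRight τ))
      (parFam SS SC) (parFam SA ST),
    relMap Subtype.val Θ =
      {pq ∈ Φ | VisP (PbFam w.L w.R (compLeft σ) (compRight τ)) σ pq.1 ∧
                VisP (PbFam w.L w.R (compLeft σ) (compRight τ)) σ pq.2}}

section Helpers
variable {E F : Type u}

lemma config_finite (A : ES E) {x : Set E} (hx : Config A x) : x.Finite :=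
  A.con_finite x hx.1

lemma config_subset (A : ES E) {x y : Set E} (hy : Config A y) (hxy : x ⊆ y)
    (hdc : ∀ ⦃e⦄, e ∈ x → ∀ ⦃e'⦄, A.le e' e → e' ∈ x) : Config A x :=
  ⟨A.con_mono hxy hy.1, hdc⟩

lemma exists_minimal_aux (A : ES E) : ∀ n : ℕ, ∀ s : Set E, s.Finite → s.ncard ≤ n →
    s.Nonempty → ∃ m ∈ s, ∀ q ∈ s, A.le q m → q = m := by
  intro n
  induction n with
  | zero =>
    intro s hf hc hne
    exfalso
    have := Set.ncard_pos hf |>.mpr hne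
    omega
  | succ n ih =>
    intro s hf hc hne
    obtain ⟨e, he⟩ := hne
    by_cases hmin : ∀ q ∈ s, A.le q e → q = e
    · exact ⟨e, he, hmin⟩
    · push_neg at hmin
      obtain ⟨q, hq, hqe, hqne⟩ := hmin
      set s' : Set E := {q ∈ s | A.le q e ∧ q ≠ e} with hs'
      have hs'sub : s' ⊆ s \ {e} := by
        intro a ha; exact ⟨ha.1, ha.2.2⟩
      have hs'f : s'.Finite := hf.subset (fun a ha => ha.1)
      have hcard : s'.ncard ≤ n := by
        have h1 : s'.ncard ≤ (s \ {e}).ncard := Set.ncard_le_ncard hs'sub (hf.diff)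
        have h2 : (s \ {e}).ncard = s.ncard - 1 := by
          rw [Set.ncard_diff_singleton_of_mem he]
        have h3 : 1 ≤ s.ncard := Set.ncard_pos hf |>.mpr ⟨e, he⟩
        omega
      obtain ⟨m, hm, hmmin⟩ := ih s' hs'f hcard ⟨q, hq, hqe, hqne⟩
      refine ⟨m, hm.1, ?_⟩
      intro a ha hale
      by_cases hae : a = e
      · subst hae
        have : A.le m a := A.le_trans hm.2.1 (A.le_refl _) -- m ≤ e = a
        exact (hm.2.2 (A.le_antisymm this hale)).elim
      · exact hmmin a ⟨ha, A.le_trans hale hm.2.1, hae⟩ hale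

lemma exists_minimal (A : ES E) {s : Set E} (hf : s.Finite) (hne : s.Nonempty) :
    ∃ m ∈ s, ∀ q ∈ s, A.le q m → q = m :=
  exists_minimal_aux A s.ncard s hf le_rfl hne

end Helpers

/-! ## Generic copycat facts -/

section CC
variable {E : Type u}

def sideS (i : Bool) (x : Set (Bool × E)) : Set E := {a | (i, a) ∈ x}

lemma mem_sideS {i : Bool} {x : Set (Bool × E)} {a : E} : a ∈ sideS i x ↔ (i, a) ∈ x :=
  Iff.rfl

lemma ccLe_snd (B : ESP E) {p q : Bool × E} (h : ccLe B p q) : B.le p.2 q.2 := by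
  induction h with
  | refl => exact B.le_refl _
  | tail _ hbase ih =>
    rcases hbase with ⟨_, hle⟩ | ⟨heq, _, _⟩
    · exact B.le_trans ih hle
    · rwa [← heq]

lemma ccPol_flip (B : ESP E) (j : Bool) (a : E) : ccPol B (!j, a) = !ccPol B (j, a) := by
  cases j <;> simp [ccPol]

lemma dc_of_base (B : ESP E) {x : Set (Bool × E)}
    (h : ∀ p q, ccBase B p q → q ∈ x → p ∈ x) :
    ∀ p q, ccLe B p q → q ∈ x → p ∈ x := by
  intro p q hpq hq
  induction hpq with
  | refl => exact hq
  | tail _ hbc ih => exact ih (h _ _ hbc hq)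

lemma ccDcl_eq (B : ESP E) {x : Set (Bool × E)}
    (hdc : ∀ p q, ccLe B p q → q ∈ x → p ∈ x) : ccDcl B x = x := by
  ext p
  constructor
  · rintro ⟨q, hq, hpq⟩; exact hdc p q hpq hq
  · intro hp; exact ⟨p, hp, Relation.ReflTransGen.refl⟩

/-- characterisation of copycat configurations -/
def ccOK (B : ESP E) (x : Set (Bool × E)) : Prop :=
  Config B.toES (sideS false x) ∧ Config B.toES (sideS true x) ∧
  (∀ c, (true, c) ∈ x → B.pol c = true → (false, c) ∈ x) ∧
  (∀ c, (false, c) ∈ x → B.pol c = false → (true, c) ∈ x)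

variable {B : ESP E} {CB : ESP (Bool × E)}

lemma cc_le_iff (hCB : IsCopycatOf B CB) (p q : Bool × E) : CB.le p q ↔ ccLe B p q :=
  hCB.1 p q

lemma config_dc_ccLe (hCB : IsCopycatOf B CB) {x : Set (Bool × E)}
    (hx : Config CB.toES x) : ∀ p q, ccLe B p q → q ∈ x → p ∈ x := by
  intro p q hpq hq
  exact hx.2 hq ((hCB.1 p q).mpr hpq)

lemma config_cc_iff (hCB : IsCopycatOf B CB) (x : Set (Bool × E)) :
    Config CB.toES x ↔ ccOK B x := by
  constructor
  · intro hx
    have hdc := config_dc_ccLe hCB hx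
    have hdcl := ccDcl_eq B hdc
    have hcon := (hCB.2.1 x).1 hx.1
    rw [hdcl] at hcon
    have hside : ∀ i : Bool, Config B.toES (sideS i x) := by
      intro i
      refine ⟨?_, ?_⟩
      · cases i
        · exact hcon.2.1
        · exact hcon.2.2
      · intro a ha a' hle
        exact hdc (i, a') (i, a) (Relation.ReflTransGen.single (Or.inl ⟨rfl, hle⟩)) ha
    refine ⟨hside false, hside true, ?_, ?_⟩
    · intro c hc hpol
      refine hdc (false, c) (true, c) (Relation.ReflTransGen.single (Or.inr ?_)) hc
      exact ⟨rfl, by simp, by simpa [ccPol]⟩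
    · intro c hc hpol
      refine hdc (true, c) (false, c) (Relation.ReflTransGen.single (Or.inr ?_)) hc
      exact ⟨rfl, by simp, by simp [ccPol, hpol]⟩
  · rintro ⟨h0, h1, hc1, hc2⟩
    have hbase : ∀ p q, ccBase B p q → q ∈ x → p ∈ x := by
      rintro ⟨ip, ap⟩ ⟨iq, aq⟩ (⟨hfst, hle⟩ | ⟨hsnd, hne, hpol⟩) hq
      · simp only at hfst hle
        subst hfst
        cases ip
        · exact h0.2 hq hle
        · exact h1.2 hq hle
      · simp only at hsnd hne hpol
        subst hsnd
        have hp1 : ip = !iq := by cases ip <;> cases iq <;> simp_all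
        subst hp1
        cases iq
        · have hpolq : B.pol ap = false := by simpa [ccPol] using hpol
          exact hc2 ap hq hpolq
        · have hpolq : B.pol ap = true := by simpa [ccPol] using hpol
          exact hc1 ap hq hpolq
    have hdc : ∀ p q, ccLe B p q → q ∈ x → p ∈ x := dc_of_base B hbase
    have hfin : x.Finite := by
      have hsub : x ⊆ (fun a => ((false : Bool), a)) '' (sideS false x) ∪
          (fun a => ((true : Bool), a)) '' (sideS true x) := by
        rintro ⟨i, a⟩ hp
        cases i
        · exact Or.inl ⟨a, hp, rfl⟩
        · exact Or.inr ⟨a, hp, rfl⟩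
      exact Set.Finite.subset (Set.Finite.union
        ((config_finite _ h0).image _) ((config_finite _ h1).image _)) hsub
    refine ⟨?_, ?_⟩
    · rw [hCB.2.1]
      rw [ccDcl_eq B hdc]
      exact ⟨hfin, h0.1, h1.1⟩
    · intro p hp q hle
      exact hdc q p ((hCB.1 q p).mp hle) hp

lemma cc_pol (hCB : IsCopycatOf B CB) (p : Bool × E) : CB.pol p = ccPol B p := hCB.2.2 p

end CC

section CCMap
variable {E F : Type u} {B : ESP E} {Bt : ESP F} {CB : ESP (Bool × E)}
  {CBt : ESP (Bool × F)} {f : F → E}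

lemma sideS_image (i : Bool) (x : Set (Bool × F)) :
    sideS i (ccMap f '' x) = f '' sideS i x := by
  ext a
  constructor
  · rintro ⟨⟨j, b⟩, hb, heq⟩
    have h1 : j = i := congrArg Prod.fst heq
    have h2 : f b = a := congrArg Prod.snd heq
    subst h1
    exact ⟨b, hb, h2⟩
  · rintro ⟨b, hb, heq⟩
    exact ⟨(i, b), hb, by simp [ccMap, heq]⟩

lemma ccPol_map (hf : ∀ e, B.pol (f e) = Bt.pol e) (p : Bool × F) :
    ccPol B (ccMap f p) = ccPol Bt p := by
  obtain ⟨i, a⟩ := p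
  cases i <;> simp [ccPol, ccMap, hf]

lemma ccBase_map (hrig : ∀ a a', Bt.le a a' → B.le (f a) (f a'))
    (hf : ∀ e, B.pol (f e) = Bt.pol e) {p q : Bool × F} (h : ccBase Bt p q) :
    ccBase B (ccMap f p) (ccMap f q) := by
  rcases h with ⟨h1, hle⟩ | ⟨h2, hne, hpol⟩
  · exact Or.inl ⟨h1, hrig _ _ hle⟩
  · refine Or.inr ⟨by simp [ccMap, h2], by simpa [ccMap] using hne, ?_⟩
    rw [ccPol_map hf]; exact hpol

lemma ccLe_map (hrig : ∀ a a', Bt.le a a' → B.le (f a) (f a'))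
    (hf : ∀ e, B.pol (f e) = Bt.pol e) {p q : Bool × F} (h : ccLe Bt p q) :
    ccLe B (ccMap f p) (ccMap f q) := by
  induction h with
  | refl => exact Relation.ReflTransGen.refl
  | tail _ hbc ih => exact Relation.ReflTransGen.tail ih (ccBase_map hrig hf hbc)

lemma ccMap_rigid (hCB : IsCopycatOf B CB) (hCBt : IsCopycatOf Bt CBt)
    (hrig : ∀ a a', Bt.le a a' → B.le (f a) (f a'))
    (hf : ∀ e, B.pol (f e) = Bt.pol e) :
    ∀ p q, CBt.le p q → CB.le (ccMap f p) (ccMap f q) := by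
  intro p q h
  rw [hCB.1]
  exact ccLe_map hrig hf ((hCBt.1 p q).mp h)

lemma ccMap_config (hCB : IsCopycatOf B CB) (hCBt : IsCopycatOf Bt CBt)
    (hf : IsESPMap Bt B f) {x : Set (Bool × F)} (hx : Config CBt.toES x) :
    Config CB.toES (ccMap f '' x) := by
  rw [config_cc_iff hCB]
  rw [config_cc_iff hCBt] at hx
  obtain ⟨h0, h1, hc1, hc2⟩ := hx
  refine ⟨?_, ?_, ?_, ?_⟩
  · rw [sideS_image]; exact hf.1.1 _ h0
  · rw [sideS_image]; exact hf.1.1 _ h1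
  · intro c hc hpol
    have : c ∈ sideS true (ccMap f '' x) := hc
    rw [sideS_image] at this
    obtain ⟨b, hb, heq⟩ := this
    have : (false, b) ∈ x := hc1 b hb (by rw [← hf.2 b, heq]; exact hpol)
    have : f b ∈ f '' sideS false x := ⟨b, this, rfl⟩
    rw [← sideS_image] at this
    rw [← heq]; exact this
  · intro c hc hpol
    have : c ∈ sideS false (ccMap f '' x) := hc
    rw [sideS_image] at this
    obtain ⟨b, hb, heq⟩ := this
    have : (true, b) ∈ x := hc2 b hb (by rw [← hf.2 b, heq]; exact hpol)
    have : f b ∈ f '' sideS true x := ⟨b, this, rfl⟩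
    rw [← sideS_image] at this
    rw [← heq]; exact this

lemma ccMap_inj (hCBt : IsCopycatOf Bt CBt) (hf : IsESPMap Bt B f)
    {x : Set (Bool × F)} (hx : Config CBt.toES x) :
    ∀ p ∈ x, ∀ q ∈ x, ccMap f p = ccMap f q → p = q := by
  rintro ⟨i, a⟩ ha ⟨j, b⟩ hb heq
  have h1 : i = j := congrArg Prod.fst heq
  have h2 : f a = f b := congrArg Prod.snd heq
  subst h1
  rw [config_cc_iff hCBt] at hx
  have hside : Config Bt.toES (sideS i x) := by cases i; exacts [hx.1, hx.2.1]
  have : a = b := hf.1.2 _ hside a ha b hb h2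
  rw [this]

lemma ccMap_espmap (hCB : IsCopycatOf B CB) (hCBt : IsCopycatOf Bt CBt)
    (hf : IsESPMap Bt B f) : IsESPMap CBt CB (ccMap f) := by
  refine ⟨⟨fun x hx => ccMap_config hCB hCBt hf hx,
    fun x hx => ccMap_inj hCBt hf hx⟩, ?_⟩
  intro p
  rw [hCB.2.2, hCBt.2.2]
  exact ccPol_map hf.2 p

end CCMap

section Main
variable {EA EAt : Type u} {A : ESP EA} {At : ESP EAt} {l r : EAt → EA}
  {CA : ESP (Bool × EA)} {CAt : ESP (Bool × EAt)}

lemma mem_ccMap_image {f : EAt → EA} {x : Set (Bool × EAt)} {i : Bool} {c : EA} :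
    (i, c) ∈ ccMap f '' x ↔ c ∈ f '' sideS i x := by
  rw [← sideS_image, mem_sideS]

lemma sideS_insert_self (j : Bool) (b : EAt) (x : Set (Bool × EAt)) :
    sideS j (insert (j, b) x) = insert b (sideS j x) := by
  ext a
  simp [sideS, Prod.ext_iff]

lemma sideS_insert_other {i j : Bool} (h : i ≠ j) (b : EAt) (x : Set (Bool × EAt)) :
    sideS i (insert (j, b) x) = sideS i x := by
  ext a
  simp only [sideS, Set.mem_insert_iff, Set.mem_setOf_eq, Prod.ext_iff]
  constructor
  · rintro (⟨h1, h2⟩ | h')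
    · exact absurd h1 h
    · exact h'
  · exact fun h' => Or.inr h'

lemma invI (hCAt : IsCopycatOf At CAt) (hlmap : IsESPMap At A l)
    {x : Set (Bool × EAt)} (hx : Config CAt.toES x) {c₀ c₁ : EAt}
    (h0 : (false, c₀) ∈ x) (h1 : (true, c₁) ∈ x) (he : l c₀ = l c₁) : c₀ = c₁ := by
  rw [config_cc_iff hCAt] at hx
  obtain ⟨hs0, hs1, hc1, hc2⟩ := hx
  cases hp : At.pol c₁
  · have hp0 : At.pol c₀ = false := by
      rw [← hlmap.2 c₀, he, hlmap.2 c₁]; exact hp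
    have h0' : (true, c₀) ∈ x := hc2 c₀ h0 hp0
    exact hlmap.1.2 _ hs1 c₀ h0' c₁ h1 he
  · have h1' : (false, c₁) ∈ x := hc1 c₁ h1 hp
    exact hlmap.1.2 _ hs0 c₀ h0 c₁ h1' he

lemma side_config (hCAt : IsCopycatOf At CAt) {x : Set (Bool × EAt)}
    (hx : Config CAt.toES x) (i : Bool) : Config At.toES (sideS i x) := by
  rw [config_cc_iff hCAt] at hx
  cases i
  exacts [hx.1, hx.2.1]

/-- The crux: adding a positive copycat event to the other side stays consistent. -/
lemma crux (hCAt : IsCopycatOf At CAt) (hlmap : IsESPMap At A l)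
    (hrace : MapPresRaces At A l)
    {x : Set (Bool × EAt)} (hx : Config CAt.toES x) {j : Bool} {b : EAt}
    (hbi : (!j, b) ∈ x) (hbj : (j, b) ∉ x) (hpolj : ccPol At (j, b) = true)
    (hpred : ∀ a, At.le a b → a ≠ b → (j, a) ∈ x)
    (himg : Config A.toES (l '' sideS j x ∪ {l b})) :
    Config At.toES (insert b (sideS j x)) := by
  have hxOK := (config_cc_iff hCAt _).mp hx
  obtain ⟨hs0, hs1, hc1, hc2⟩ := hxOK
  have hsj : Config At.toES (sideS j x) := by cases j; exacts [hs0, hs1]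
  have hsi : Config At.toES (sideS (!j) x) := by cases j; exacts [hs1, hs0]
  set z : Set EAt := sideS false x ∩ sideS true x with hz
  have hzj : z ⊆ sideS j x := by cases j; exacts [Set.inter_subset_left, Set.inter_subset_right]
  have hzi : z ⊆ sideS (!j) x := by
    cases j; exacts [Set.inter_subset_right, Set.inter_subset_left]
  have hzcfg : Config At.toES z := by
    refine config_subset _ hs0 Set.inter_subset_left ?_
    intro e he e' hle
    exact ⟨hs0.2 he.1 hle, hs1.2 he.2 hle⟩
  have hbnotj : b ∉ sideS j x := hbj
  have hpredz : ∀ a, At.le a b → a ≠ b → a ∈ z := by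
    intro a hle hne
    have h1 : a ∈ sideS j x := hpred a hle hne
    have h2 : a ∈ sideS (!j) x := hsi.2 hbi hle
    cases j
    · exact ⟨h1, h2⟩
    · exact ⟨h2, h1⟩
  have hbz : Config At.toES (insert b z) := by
    refine ⟨At.con_mono ?_ hsi.1, ?_⟩
    · intro a ha
      rcases ha with ha | ha
      · rw [ha]; exact hbi
      · exact hzi ha
    · rintro e (he | he) e' hle
      · subst he
        by_cases hee : e' = e
        · rw [hee]; exact Set.mem_insert _ _
        · exact Set.mem_insert_of_mem _ (hpredz e' hle hee)
      · exact Set.mem_insert_of_mem _ (hzcfg.2 he hle)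
  -- polarity facts
  have hpolb : At.pol b = j := by
    cases j
    · have : (!(At.pol b)) = true := by simpa [ccPol] using hpolj
      simpa using this
    · simpa [ccPol] using hpolj
  have hpoln : ∀ nn ∈ sideS j x, nn ∉ z → At.pol nn = !j := by
    intro nn hnn hnnz
    cases j
    · -- nn ∈ side false, ∉ side true
      have h2 : nn ∉ sideS true x := fun h => hnnz ⟨hnn, h⟩
      cases hpnn : At.pol nn
      · exact absurd (hc2 nn hnn hpnn) h2
      · rfl
    · have h2 : nn ∉ sideS false x := fun h => hnnz ⟨h, hnn⟩
      cases hpnn : At.pol nn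
      · rfl
      · exact absurd (hc1 nn hnn hpnn) h2
  have hbfin : (sideS j x).Finite := config_finite _ hsj
  -- main induction
  have main : ∀ n : ℕ, ∀ w : Set EAt, Config At.toES w → z ⊆ w → w ⊆ sideS j x →
      Config At.toES (insert b w) → (sideS j x \ w).ncard ≤ n →
      Config At.toES (insert b (sideS j x)) := by
    intro n
    induction n with
    | zero =>
      intro w _ _ hwt hwb hcard
      have hfin : (sideS j x \ w).Finite := hbfin.diff
      have : sideS j x \ w = ∅ := by
        rw [← Set.ncard_eq_zero hfin]; omega
      have hwt' : sideS j x ⊆ w := by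
        intro a ha
        by_contra hna
        have hmem : a ∈ sideS j x \ w := ⟨ha, hna⟩
        rw [this] at hmem
        exact hmem
      rw [subset_antisymm hwt hwt'] at hwb
      exact hwb
    | succ n ih =>
      intro w hw hzw hwt hwb hcard
      by_cases hfull : sideS j x ⊆ w
      · rw [subset_antisymm hwt hfull] at hwb; exact hwb
      · have hne : (sideS j x \ w).Nonempty := by
          rw [Set.not_subset] at hfull
          obtain ⟨a, ha, hna⟩ := hfull
          exact ⟨a, ha, hna⟩
        obtain ⟨nn, hnnmem, hnnmin⟩ := exists_minimal At.toES (hbfin.diff) hne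
        obtain ⟨hnnt, hnnw⟩ := hnnmem
        have hbw : b ∉ w := fun h => hbnotj (hwt h)
        have hnnb : nn ≠ b := fun h => hbnotj (h ▸ hnnt)
        have hnnz : nn ∉ z := fun h => hnnw (hzw h)
        -- insert nn w is a config
        have hwnn : Config At.toES (insert nn w) := by
          refine ⟨At.con_mono ?_ hsj.1, ?_⟩
          · rintro a (ha | ha)
            · rw [ha]; exact hnnt
            · exact hwt ha
          · rintro e (he | he) e' hle
            · subst he
              by_cases hee : e' = e
              · rw [hee]; exact Set.mem_insert _ _
              · have he't : e' ∈ sideS j x := hsj.2 hnnt hle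
                by_cases he'w : e' ∈ w
                · exact Set.mem_insert_of_mem _ he'w
                · exact absurd (hnnmin e' ⟨he't, he'w⟩ hle) hee
            · exact Set.mem_insert_of_mem _ (hw.2 he hle)
        by_cases hcfg : Config At.toES (insert nn (insert b w))
        · -- recurse
          have hwb' : Config At.toES (insert b (insert nn w)) := by
            rw [Set.insert_comm]; exact hcfg
          have hcard' : (sideS j x \ insert nn w).ncard ≤ n := by
            have hsub : sideS j x \ insert nn w ⊆ (sideS j x \ w) \ {nn} := by
              rintro a ⟨ha, hna⟩
              refine ⟨⟨ha, fun h => hna (Set.mem_insert_of_mem _ h)⟩, ?_⟩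
              intro h
              exact hna (h ▸ Set.mem_insert _ _)
            have h1 : (sideS j x \ insert nn w).ncard ≤ ((sideS j x \ w) \ {nn}).ncard :=
              Set.ncard_le_ncard hsub ((hbfin.diff).diff)
            have h2 : ((sideS j x \ w) \ {nn}).ncard = (sideS j x \ w).ncard - 1 :=
              Set.ncard_diff_singleton_of_mem ⟨hnnt, hnnw⟩
            have h3 : 1 ≤ (sideS j x \ w).ncard :=
              Set.ncard_pos (hbfin.diff) |>.mpr hne
            omega
          refine ih (insert nn w) hwnn (fun a ha => Set.mem_insert_of_mem _ (hzw ha)) ?_ hwb' hcard'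
          rintro a (ha | ha)
          · rw [ha]; exact hnnt
          · exact hwt ha
        · -- race situation: contradiction
          exfalso
          have hCovnn : Cov At.toES w nn := ⟨hw, hnnw, hwnn⟩
          have hCovb : Cov At.toES w b := ⟨hw, hbw, hwb⟩
          have himg' : Config A.toES (insert (l nn) (insert (l b) (l '' w))) := by
            refine ⟨A.con_mono ?_ himg.1, ?_⟩
            · rintro a (ha | ha | ha)
              · rw [ha]; exact Or.inl ⟨nn, hnnt, rfl⟩
              · rw [ha]; exact Or.inr rfl
              · obtain ⟨e, he, heq⟩ := ha
                exact Or.inl ⟨e, hwt he, heq⟩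
            · rintro e (he | he | he) e' hle
              · subst he
                have h1 : Config A.toES (l '' insert nn w) := hlmap.1.1 _ hwnn
                have h2 : e' ∈ l '' insert nn w := h1.2 ⟨nn, Set.mem_insert _ _, rfl⟩ hle
                obtain ⟨a, (ha | ha), heq⟩ := h2
                · rw [ha] at heq; rw [← heq]; exact Set.mem_insert _ _
                · exact Set.mem_insert_of_mem _ (Set.mem_insert_of_mem _ ⟨a, ha, heq⟩)
              · subst he
                have h1 : Config A.toES (l '' insert b w) := hlmap.1.1 _ hwb
                have h2 : e' ∈ l '' insert b w := h1.2 ⟨b, Set.mem_insert _ _, rfl⟩ hle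
                obtain ⟨a, (ha | ha), heq⟩ := h2
                · rw [ha] at heq; rw [← heq]
                  exact Set.mem_insert_of_mem _ (Set.mem_insert _ _)
                · exact Set.mem_insert_of_mem _ (Set.mem_insert_of_mem _ ⟨a, ha, heq⟩)
              · obtain ⟨a, ha, heq⟩ := he
                have h1 : Config A.toES (l '' w) := hlmap.1.1 _ hw
                have h2 : e' ∈ l '' w := h1.2 ⟨a, ha, heq⟩ hle
                exact Set.mem_insert_of_mem _ (Set.mem_insert_of_mem _ h2)
          cases hj : j
          · -- j = false : nn positive, b negative
            rw [hj] at hpoln hpolb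
            have hpnn : At.pol nn = true := by simpa using hpoln nn (hj ▸ hnnt) hnnz
            have hpb : At.pol b = false := hpolb
            have := hrace w b nn hCovb hCovnn hpb hpnn (by rwa [Set.insert_comm])
            exact this (by rwa [Set.insert_comm] at himg')
          · -- j = true : nn negative, b positive
            rw [hj] at hpoln hpolb
            have hpnn : At.pol nn = false := by simpa using hpoln nn (hj ▸ hnnt) hnnz
            have hpb : At.pol b = true := hpolb
            have := hrace w nn b hCovnn hCovb hpnn hpb hcfg
            exact this himg'
  exact main (sideS j x \ z).ncard z hzcfg subset_rfl hzj hbz le_rfl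

end Main

section Main
variable {EA EAt : Type u} {A : ESP EA} {At : ESP EAt} {l r : EAt → EA}
  {CA : ESP (Bool × EA)} {CAt : ESP (Bool × EAt)}

lemma cc_config_insert (hCAt : IsCopycatOf At CAt) {x : Set (Bool × EAt)}
    (hx : Config CAt.toES x) (j : Bool) (b : EAt)
    (hside : Config At.toES (insert b (sideS j x)))
    (h1 : j = true → At.pol b = true → (false, b) ∈ insert (j, b) x)
    (h2 : j = false → At.pol b = false → (true, b) ∈ insert (j, b) x) :
    Config CAt.toES (insert (j, b) x) := by
  rw [config_cc_iff hCAt] at hx ⊢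
  obtain ⟨hs0, hs1, hc1, hc2⟩ := hx
  cases j
  · refine ⟨?_, ?_, ?_, ?_⟩
    · rw [sideS_insert_self]; exact hside
    · rw [sideS_insert_other (by simp)]; exact hs1
    · intro c hc hp
      have hc' : (true, c) ∈ x := by
        rcases hc with hc | hc
        · exact absurd (congrArg Prod.fst hc) (by simp)
        · exact hc
      exact Set.mem_insert_of_mem _ (hc1 c hc' hp)
    · intro c hc hp
      rcases hc with hc | hc
      · have hcb : c = b := congrArg Prod.snd hc
        subst hcb
        exact h2 rfl hp
      · exact Set.mem_insert_of_mem _ (hc2 c hc hp)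
  · refine ⟨?_, ?_, ?_, ?_⟩
    · rw [sideS_insert_other (by simp)]; exact hs0
    · rw [sideS_insert_self]; exact hside
    · intro c hc hp
      rcases hc with hc | hc
      · have hcb : c = b := congrArg Prod.snd hc
        subst hcb
        exact h1 rfl hp
      · exact Set.mem_insert_of_mem _ (hc1 c hc hp)
    · intro c hc hp
      have hc' : (false, c) ∈ x := by
        rcases hc with hc | hc
        · exact absurd (congrArg Prod.fst hc) (by simp)
        · exact hc
      exact Set.mem_insert_of_mem _ (hc2 c hc' hp)

lemma ccMap_apply (f : EAt → EA) (j : Bool) (b : EAt) : ccMap f (j, b) = (j, f b) := rfl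

/-- Openness of `ccMap l`. -/
lemma ccMap_l_open (hCA : IsCopycatOf A CA) (hCAt : IsCopycatOf At CAt)
    (hlmap : IsESPMap At A l) (hlopen : OpenMap At.toES A.toES l)
    (hrace : MapPresRaces At A l) :
    OpenMap CAt.toES CA.toES (ccMap l) := by
  have hlrig : ∀ a a', At.le a a' → A.le (l a) (l a') := hlopen.1.2
  constructor
  · exact ⟨⟨fun x hx => ccMap_config hCA hCAt hlmap hx,
      fun x hx => ccMap_inj hCAt hlmap hx⟩, ccMap_rigid hCA hCAt hlrig hlmap.2⟩
  · intro x0 y hx0 hy hsub0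
    have hyfin : y.Finite := config_finite _ hy
    suffices h : ∀ n : ℕ, ∀ x : Set (Bool × EAt), Config CAt.toES x →
        ccMap l '' x ⊆ y → (y \ ccMap l '' x).ncard ≤ n →
        ∃ x', Config CAt.toES x' ∧ x ⊆ x' ∧ ccMap l '' x' = y by
      exact h _ x0 hx0 hsub0 le_rfl
    intro n
    induction n with
    | zero =>
      intro x hx hsub hcard
      refine ⟨x, hx, subset_rfl, subset_antisymm hsub ?_⟩
      intro p hp
      by_contra hnp
      have hmem : p ∈ y \ ccMap l '' x := ⟨hp, hnp⟩
      have hfin : (y \ ccMap l '' x).Finite := hyfin.diff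
      have : y \ ccMap l '' x = ∅ := by rw [← Set.ncard_eq_zero hfin]; omega
      rw [this] at hmem
      exact hmem
    | succ n ih =>
      intro x hx hsub hcard
      by_cases hfull : y ⊆ ccMap l '' x
      · exact ⟨x, hx, subset_rfl, subset_antisymm hsub hfull⟩
      · have hne : (y \ ccMap l '' x).Nonempty := by
          rw [Set.not_subset] at hfull
          obtain ⟨p, hp, hnp⟩ := hfull
          exact ⟨p, hp, hnp⟩
        obtain ⟨q, hqmem, hqmin⟩ := exists_minimal CA.toES (hyfin.diff) hne
        obtain ⟨j, b⟩ := q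
        have hqy : (j, b) ∈ y := hqmem.1
        have hqim : (j, b) ∉ ccMap l '' x := hqmem.2
        have hM : ∀ p, CA.le p (j, b) → p ≠ (j, b) → p ∈ ccMap l '' x := by
          intro p hle hne'
          have hpy : p ∈ y := hy.2 hqy hle
          by_contra hpim
          exact hne' (hqmin p ⟨hpy, hpim⟩ hle)
        have hbside : b ∉ l '' sideS j x := by
          intro hb
          exact hqim (mem_ccMap_image.mpr hb)
        -- target is a config of A
        have hyOK := (config_cc_iff hCA _).mp hy
        have hyside : ∀ i : Bool, Config A.toES (sideS i y) := by
          intro i; cases i; exacts [hyOK.1, hyOK.2.1]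
        have hxside : ∀ i : Bool, Config At.toES (sideS i x) := fun i =>
          side_config hCAt hx i
        have himside : ∀ (i : Bool), l '' sideS i x ⊆ sideS i y := by
          intro i c hc
          exact hsub (mem_ccMap_image.mpr hc)
        have htcfg : Config A.toES (l '' sideS j x ∪ {b}) := by
          refine ⟨A.con_mono ?_ (hyside j).1, ?_⟩
          · rintro c (hc | hc)
            · exact himside j hc
            · rw [hc]; exact hqy
          · rintro e (he | he) e' hle
            · have h1 : Config A.toES (l '' sideS j x) := hlmap.1.1 _ (hxside j)
              exact Or.inl (h1.2 he hle)
            · rw [he] at hle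
              by_cases hee : e' = b
              · rw [hee]; exact Or.inr rfl
              · have h1 : CA.le (j, e') (j, b) :=
                  (hCA.1 _ _).mpr (Relation.ReflTransGen.single (Or.inl ⟨rfl, hle⟩))
                have h2 : (j, e') ∈ ccMap l '' x := hM _ h1 (by simp [Prod.ext_iff, hee])
                exact Or.inl (mem_ccMap_image.mp h2)
        cases hpol : ccPol A (j, b)
        · -- negative case: lift along openness of l
          obtain ⟨z, hz, hsz, himz⟩ := hlopen.2 (sideS j x) (l '' sideS j x ∪ {b})
            (hxside j) htcfg Set.subset_union_left
          have hbz : b ∈ l '' z := by rw [himz]; exact Or.inr rfl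
          obtain ⟨b', hb'z, hb'⟩ := hbz
          have hb'ns : b' ∉ sideS j x := fun h => hbside ⟨b', h, hb'⟩
          have hnews : Config At.toES (insert b' (sideS j x)) := by
            refine ⟨At.con_mono ?_ hz.1, ?_⟩
            · rintro a (ha | ha)
              · rw [ha]; exact hb'z
              · exact hsz ha
            · rintro e (he | he) e' hle
              · subst he
                by_cases hee : e' = e
                · rw [hee]; exact Set.mem_insert _ _
                · have he'z : e' ∈ z := hz.2 hb'z hle
                  have hle' : A.le (l e') (l e) := hlrig _ _ hle
                  have hlb : l e' ∈ l '' z := ⟨e', he'z, rfl⟩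
                  rw [himz] at hlb
                  rcases hlb with hlb | hlb
                  · obtain ⟨a2, ha2, ha2eq⟩ := hlb
                    have : e' = a2 := hlmap.1.2 z hz e' he'z a2 (hsz ha2) ha2eq.symm
                    rw [this]
                    exact Set.mem_insert_of_mem _ ha2
                  · -- l e' = b = l b' : e' = b' contradiction
                    have : e' = e := hlmap.1.2 z hz e' he'z e hb'z (by rw [hlb, hb'])
                    exact absurd this hee
              · exact Set.mem_insert_of_mem _ ((hxside j).2 he hle)
          -- polarity of b'
          have hpolb' : At.pol b' = A.pol b := by rw [← hlmap.2 b', hb']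
          have hx' : Config CAt.toES (insert (j, b') x) := by
            refine cc_config_insert hCAt hx j b' hnews ?_ ?_
            · intro hj hpb
              exfalso
              rw [hj] at hpol
              rw [hpolb'] at hpb
              simp [ccPol, hpb] at hpol
            · intro hj hpb
              exfalso
              rw [hj] at hpol
              rw [hpolb'] at hpb
              simp [ccPol, hpb] at hpol
          have him' : ccMap l '' insert (j, b') x = insert (j, b) (ccMap l '' x) := by
            rw [Set.image_insert_eq, ccMap_apply, hb']
          have hsub' : ccMap l '' insert (j, b') x ⊆ y := by
            rw [him']
            rintro p (hp | hp)
            · rw [hp]; exact hqy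
            · exact hsub hp
          have hcard' : (y \ ccMap l '' insert (j, b') x).ncard ≤ n := by
            rw [him']
            have hsubd : y \ insert (j, b) (ccMap l '' x) ⊆ (y \ ccMap l '' x) \ {(j, b)} := by
              rintro p ⟨hp, hnp⟩
              exact ⟨⟨hp, fun h => hnp (Set.mem_insert_of_mem _ h)⟩,
                fun h => hnp (h ▸ Set.mem_insert _ _)⟩
            have h1 := Set.ncard_le_ncard hsubd ((hyfin.diff).diff)
            have h2 : ((y \ ccMap l '' x) \ {(j, b)}).ncard = (y \ ccMap l '' x).ncard - 1 :=
              Set.ncard_diff_singleton_of_mem ⟨hqy, hqim⟩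
            have h3 : 1 ≤ (y \ ccMap l '' x).ncard :=
              Set.ncard_pos (hyfin.diff) |>.mpr hne
            omega
          obtain ⟨x', hx'', hsub'', him''⟩ := ih (insert (j, b') x) hx' hsub' hcard'
          exact ⟨x', hx'', fun p hp => hsub'' (Set.mem_insert_of_mem _ hp), him''⟩
        · -- positive case: copy the mirror event
          have hmle : CA.le (!j, b) (j, b) := by
            refine (hCA.1 _ _).mpr (Relation.ReflTransGen.single (Or.inr ?_))
            exact ⟨rfl, by cases j <;> simp, hpol⟩
          have hmim : (!j, b) ∈ ccMap l '' x := by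
            refine hM _ hmle ?_
            simp [Prod.ext_iff]
          obtain ⟨bt, hbt, hbteq⟩ := mem_ccMap_image.mp hmim
          have hbtns : bt ∉ sideS j x := fun h => hbside ⟨bt, h, hbteq⟩
          have hpred : ∀ a, At.le a bt → a ≠ bt → (j, a) ∈ x := by
            intro a hle hne'
            have hai : a ∈ sideS (!j) x := (hxside (!j)).2 hbt hle
            have hla : A.le (l a) b := by rw [← hbteq]; exact hlrig _ _ hle
            have hlane : l a ≠ b := by
              intro h
              exact hne' (hlmap.1.2 _ (hxside (!j)) a hai bt hbt (by rw [h, hbteq]))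
            have h1 : CA.le (j, l a) (j, b) :=
              (hCA.1 _ _).mpr (Relation.ReflTransGen.single (Or.inl ⟨rfl, hla⟩))
            have h2 : (j, l a) ∈ ccMap l '' x := hM _ h1 (by simp [Prod.ext_iff, hlane])
            obtain ⟨a2, ha2, ha2eq⟩ := mem_ccMap_image.mp h2
            have haa2 : a = a2 := by
              cases hj : j
              · rw [hj] at ha2
                have h0 : (false, a2) ∈ x := ha2
                have h1' : (true, a) ∈ x := by rw [hj] at hai; exact hai
                exact (invI hCAt hlmap hx h0 h1' (by rw [ha2eq])).symm
              · rw [hj] at ha2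
                have h1' : (true, a2) ∈ x := ha2
                have h0 : (false, a) ∈ x := by rw [hj] at hai; exact hai
                exact invI hCAt hlmap hx h0 h1' (by rw [ha2eq])
            rw [haa2]; exact ha2
          have hpoljbt : ccPol At (j, bt) = true := by
            have := ccPol_map (B := A) (Bt := At) hlmap.2 (j, bt)
            rw [ccMap_apply, hbteq] at this
            rw [← this]; exact hpol
          have himg : Config A.toES (l '' sideS j x ∪ {l bt}) := by
            rw [hbteq]; exact htcfg
          have hnews : Config At.toES (insert bt (sideS j x)) :=
            crux hCAt hlmap hrace hx hbt hbtns hpoljbt hpred himg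
          have hx' : Config CAt.toES (insert (j, bt) x) := by
            refine cc_config_insert hCAt hx j bt hnews ?_ ?_
            · intro hj _
              refine Set.mem_insert_of_mem _ ?_
              rw [hj] at hbt
              exact hbt
            · intro hj _
              refine Set.mem_insert_of_mem _ ?_
              rw [hj] at hbt
              exact hbt
          have him' : ccMap l '' insert (j, bt) x = insert (j, b) (ccMap l '' x) := by
            rw [Set.image_insert_eq, ccMap_apply, hbteq]
          have hsub' : ccMap l '' insert (j, bt) x ⊆ y := by
            rw [him']
            rintro p (hp | hp)
            · rw [hp]; exact hqy
            · exact hsub hp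
          have hcard' : (y \ ccMap l '' insert (j, bt) x).ncard ≤ n := by
            rw [him']
            have hsubd : y \ insert (j, b) (ccMap l '' x) ⊆ (y \ ccMap l '' x) \ {(j, b)} := by
              rintro p ⟨hp, hnp⟩
              exact ⟨⟨hp, fun h => hnp (Set.mem_insert_of_mem _ h)⟩,
                fun h => hnp (h ▸ Set.mem_insert _ _)⟩
            have h1 := Set.ncard_le_ncard hsubd ((hyfin.diff).diff)
            have h2 : ((y \ ccMap l '' x) \ {(j, b)}).ncard = (y \ ccMap l '' x).ncard - 1 :=
              Set.ncard_diff_singleton_of_mem ⟨hqy, hqim⟩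
            have h3 : 1 ≤ (y \ ccMap l '' x).ncard :=
              Set.ncard_pos (hyfin.diff) |>.mpr hne
            omega
          obtain ⟨x', hx'', hsub'', him''⟩ := ih (insert (j, bt) x) hx' hsub' hcard'
          exact ⟨x', hx'', fun p hp => hsub'' (Set.mem_insert_of_mem _ hp), him''⟩

end Main

section Rel
variable {E F : Type u}

def relOf (l r : F → E) (x : Set F) : Rel2 E := {p | ∃ aa ∈ x, p = (l aa, r aa)}

lemma famOf_iff (Et : ES F) (l r : F → E) (θ : Rel2 E) :
    θ ∈ famOf Et l r ↔ ∃ x, Config Et x ∧ θ = relOf l r x := Iff.rfl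

lemma mem_relOf {l r : F → E} {x : Set F} {p : E × E} :
    p ∈ relOf l r x ↔ ∃ a ∈ x, p = (l a, r a) := Iff.rfl

lemma rdom_relOf (l r : F → E) (x : Set F) : rdom (relOf l r x) = l '' x := by
  ext a
  constructor
  · rintro ⟨p, ⟨aa, haa, heq⟩, hfst⟩
    exact ⟨aa, haa, by rw [← hfst, heq]⟩
  · rintro ⟨aa, haa, heq⟩
    exact ⟨(l aa, r aa), ⟨aa, haa, rfl⟩, heq⟩

lemma rran_relOf (l r : F → E) (x : Set F) : rran (relOf l r x) = r '' x := by
  ext a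
  constructor
  · rintro ⟨p, ⟨aa, haa, heq⟩, hsnd⟩
    exact ⟨aa, haa, by rw [← hsnd, heq]⟩
  · rintro ⟨aa, haa, heq⟩
    exact ⟨(l aa, r aa), ⟨aa, haa, rfl⟩, heq⟩

lemma relOf_mono {l r : F → E} {x y : Set F} (h : x ⊆ y) : relOf l r x ⊆ relOf l r y := by
  rintro p ⟨aa, haa, heq⟩
  exact ⟨aa, h haa, heq⟩

lemma relOf_union (l r : F → E) (x y : Set F) :
    relOf l r (x ∪ y) = relOf l r x ∪ relOf l r y := by
  ext p
  constructor
  · rintro ⟨aa, (h | h), heq⟩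
    · exact Or.inl ⟨aa, h, heq⟩
    · exact Or.inr ⟨aa, h, heq⟩
  · rintro (⟨aa, h, heq⟩ | ⟨aa, h, heq⟩)
    · exact ⟨aa, Or.inl h, heq⟩
    · exact ⟨aa, Or.inr h, heq⟩

end Rel

section Asm
variable {EA : Type u}

def asm (θ₀ θ₁ : Rel2 EA) : Rel2 (Bool × EA) :=
  (fun p => (((false : Bool), p.1), ((false : Bool), p.2))) '' θ₀ ∪
  (fun p => (((true : Bool), p.1), ((true : Bool), p.2))) '' θ₁

lemma asm_mem_false {θ₀ θ₁ : Rel2 EA} {a b : EA} :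
    ((false, a), (false, b)) ∈ asm θ₀ θ₁ ↔ (a, b) ∈ θ₀ := by
  constructor
  · rintro (⟨p, hp, heq⟩ | ⟨p, hp, heq⟩)
    · obtain ⟨h1, h2⟩ := Prod.mk.injEq _ _ _ _ ▸ heq
      have ha : p.1 = a := congrArg (Prod.snd ∘ Prod.fst) heq
      have hb : p.2 = b := congrArg (Prod.snd ∘ Prod.snd) heq
      rw [← ha, ← hb]; exact hp
    · exact absurd (congrArg (Prod.fst ∘ Prod.fst) heq) (by simp)
  · intro h
    exact Or.inl ⟨(a, b), h, rfl⟩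

lemma asm_mem_true {θ₀ θ₁ : Rel2 EA} {a b : EA} :
    ((true, a), (true, b)) ∈ asm θ₀ θ₁ ↔ (a, b) ∈ θ₁ := by
  constructor
  · rintro (⟨p, hp, heq⟩ | ⟨p, hp, heq⟩)
    · exact absurd (congrArg (Prod.fst ∘ Prod.fst) heq) (by simp)
    · have ha : p.1 = a := congrArg (Prod.snd ∘ Prod.fst) heq
      have hb : p.2 = b := congrArg (Prod.snd ∘ Prod.snd) heq
      rw [← ha, ← hb]; exact hp
  · intro h
    exact Or.inr ⟨(a, b), h, rfl⟩

lemma asm_cases {θ₀ θ₁ : Rel2 EA} {P : (Bool × EA) × (Bool × EA)} (h : P ∈ asm θ₀ θ₁) :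
    ∃ i a b, P = ((i, a), (i, b)) ∧
      ((i = false ∧ (a, b) ∈ θ₀) ∨ (i = true ∧ (a, b) ∈ θ₁)) := by
  rcases h with ⟨p, hp, heq⟩ | ⟨p, hp, heq⟩
  · exact ⟨false, p.1, p.2, heq.symm, Or.inl ⟨rfl, hp⟩⟩
  · exact ⟨true, p.1, p.2, heq.symm, Or.inr ⟨rfl, hp⟩⟩

lemma asm_mono {θ₀ θ₁ ψ₀ ψ₁ : Rel2 EA} (h0 : θ₀ ⊆ ψ₀) (h1 : θ₁ ⊆ ψ₁) :
    asm θ₀ θ₁ ⊆ asm ψ₀ ψ₁ := by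
  rintro P (⟨p, hp, heq⟩ | ⟨p, hp, heq⟩)
  · exact Or.inl ⟨p, h0 hp, heq⟩
  · exact Or.inr ⟨p, h1 hp, heq⟩

lemma asm_inj {θ₀ θ₁ ψ₀ ψ₁ : Rel2 EA} (h : asm θ₀ θ₁ = asm ψ₀ ψ₁) :
    θ₀ = ψ₀ ∧ θ₁ = ψ₁ := by
  constructor
  · ext ⟨a, b⟩
    rw [← asm_mem_false (θ₁ := θ₁), h, asm_mem_false]
  · ext ⟨a, b⟩
    rw [← asm_mem_true (θ₀ := θ₀), h, asm_mem_true]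

lemma asm_insert_false (θ₀ θ₁ : Rel2 EA) (a b : EA) :
    asm (insert (a, b) θ₀) θ₁ = insert ((false, a), (false, b)) (asm θ₀ θ₁) := by
  ext P
  constructor
  · intro h
    rcases asm_cases h with ⟨i, c, d, hP, (⟨hi, hcd⟩ | ⟨hi, hcd⟩)⟩
    · subst hi
      rcases hcd with hcd | hcd
      · left; rw [hP]
        have h1 : c = a := congrArg Prod.fst hcd
        have h2 : d = b := congrArg Prod.snd hcd
        rw [h1, h2]
      · right; rw [hP]; exact asm_mem_false.mpr hcd
    · subst hi
      right; rw [hP]; exact asm_mem_true.mpr hcd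
  · rintro (h | h)
    · rw [h]
      exact asm_mem_false.mpr (Set.mem_insert _ _)
    · exact asm_mono (Set.subset_insert _ _) subset_rfl h

lemma asm_insert_true (θ₀ θ₁ : Rel2 EA) (a b : EA) :
    asm θ₀ (insert (a, b) θ₁) = insert ((true, a), (true, b)) (asm θ₀ θ₁) := by
  ext P
  constructor
  · intro h
    rcases asm_cases h with ⟨i, c, d, hP, (⟨hi, hcd⟩ | ⟨hi, hcd⟩)⟩
    · subst hi
      right; rw [hP]; exact asm_mem_false.mpr hcd
    · subst hi
      rcases hcd with hcd | hcd
      · left; rw [hP]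
        have h1 : c = a := congrArg Prod.fst hcd
        have h2 : d = b := congrArg Prod.snd hcd
        rw [h1, h2]
      · right; rw [hP]; exact asm_mem_true.mpr hcd
  · rintro (h | h)
    · rw [h]
      exact asm_mem_true.mpr (Set.mem_insert _ _)
    · exact asm_mono subset_rfl (Set.subset_insert _ _) h

lemma asm_union (θ₀ θ₁ ψ₀ ψ₁ : Rel2 EA) :
    asm (θ₀ ∪ ψ₀) (θ₁ ∪ ψ₁) = asm θ₀ θ₁ ∪ asm ψ₀ ψ₁ := by
  ext P
  constructor
  · intro h
    rcases asm_cases h with ⟨i, c, d, hP, (⟨hi, (hcd | hcd)⟩ | ⟨hi, (hcd | hcd)⟩)⟩ <;>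
      subst hi <;> subst hP
    · exact Or.inl (asm_mem_false.mpr hcd)
    · exact Or.inr (asm_mem_false.mpr hcd)
    · exact Or.inl (asm_mem_true.mpr hcd)
    · exact Or.inr (asm_mem_true.mpr hcd)
  · rintro (h | h)
    · exact asm_mono Set.subset_union_left Set.subset_union_left h
    · exact asm_mono Set.subset_union_right Set.subset_union_right h

end Asm

section SCC
variable {EA EAt : Type u} {A : ESP EA} {At : ESP EAt} {l r : EAt → EA}
  {CA : ESP (Bool × EA)} {CAt : ESP (Bool × EAt)}

lemma relOf_cc (l r : EAt → EA) (x : Set (Bool × EAt)) :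
    relOf (ccMap l) (ccMap r) x =
      asm (relOf l r (sideS false x)) (relOf l r (sideS true x)) := by
  ext P
  constructor
  · rintro ⟨⟨i, a⟩, ha, heq⟩
    cases i
    · exact Or.inl ⟨(l a, r a), ⟨a, ha, rfl⟩, by rw [heq]; rfl⟩
    · exact Or.inr ⟨(l a, r a), ⟨a, ha, rfl⟩, by rw [heq]; rfl⟩
  · intro h
    rcases asm_cases h with ⟨i, c, d, hP, (⟨hi, hcd⟩ | ⟨hi, hcd⟩)⟩
    · subst hi
      obtain ⟨a, ha, heq⟩ := hcd
      refine ⟨(false, a), ha, ?_⟩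
      rw [hP]
      have h1 : c = l a := congrArg Prod.fst heq
      have h2 : d = r a := congrArg Prod.snd heq
      rw [h1, h2]; rfl
    · subst hi
      obtain ⟨a, ha, heq⟩ := hcd
      refine ⟨(true, a), ha, ?_⟩
      rw [hP]
      have h1 : c = l a := congrArg Prod.fst heq
      have h2 : d = r a := congrArg Prod.snd heq
      rw [h1, h2]; rfl

/-- Characterisation of the copycat isomorphism family. -/
lemma scc_char (hCAt : IsCopycatOf At CAt) (hlmap : IsESPMap At A l)
    (hrmap : IsESPMap At A r)
    (hmono : ∀ aa aa', l aa = l aa' → r aa = r aa' → aa = aa')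
    (θ : Rel2 (Bool × EA)) :
    θ ∈ famOf CAt.toES (ccMap l) (ccMap r) ↔
      ∃ θ₀ ∈ famOf At.toES l r, ∃ θ₁ ∈ famOf At.toES l r,
        θ = asm θ₀ θ₁ ∧ (∀ p ∈ θ₁, A.pol p.1 = true → p ∈ θ₀) ∧
        (∀ p ∈ θ₀, A.pol p.1 = false → p ∈ θ₁) := by
  constructor
  · rintro ⟨x, hx, hθ⟩
    have hxOK := (config_cc_iff hCAt _).mp hx
    obtain ⟨hs0, hs1, hc1, hc2⟩ := hxOK
    refine ⟨relOf l r (sideS false x), ⟨_, hs0, rfl⟩,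
      relOf l r (sideS true x), ⟨_, hs1, rfl⟩, by rw [hθ]; exact relOf_cc l r x, ?_, ?_⟩
    · rintro p ⟨a, ha, heq⟩ hpol
      have hpa : At.pol a = true := by
        rw [← hlmap.2 a]
        have : p.1 = l a := congrArg Prod.fst heq
        rw [← this]; exact hpol
      exact ⟨a, hc1 a ha hpa, heq⟩
    · rintro p ⟨a, ha, heq⟩ hpol
      have hpa : At.pol a = false := by
        rw [← hlmap.2 a]
        have : p.1 = l a := congrArg Prod.fst heq
        rw [← this]; exact hpol
      exact ⟨a, hc2 a ha hpa, heq⟩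
  · rintro ⟨θ₀, ⟨x0, hx0, hθ0⟩, θ₁, ⟨x1, hx1, hθ1⟩, hθ, hcr1, hcr2⟩
    subst hθ0 hθ1
    set x : Set (Bool × EAt) :=
      (fun a => ((false : Bool), a)) '' x0 ∪ (fun a => ((true : Bool), a)) '' x1 with hxdef
    have hside0 : sideS false x = x0 := by
      ext a
      constructor
      · rintro (⟨b, hb, heq⟩ | ⟨b, hb, heq⟩)
        · have : b = a := congrArg Prod.snd heq
          rw [← this]; exact hb
        · exact absurd (congrArg Prod.fst heq) (by simp)
      · intro h; exact Or.inl ⟨a, h, rfl⟩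
    have hside1 : sideS true x = x1 := by
      ext a
      constructor
      · rintro (⟨b, hb, heq⟩ | ⟨b, hb, heq⟩)
        · exact absurd (congrArg Prod.fst heq) (by simp)
        · have : b = a := congrArg Prod.snd heq
          rw [← this]; exact hb
      · intro h; exact Or.inr ⟨a, h, rfl⟩
    have hx : Config CAt.toES x := by
      rw [config_cc_iff hCAt]
      refine ⟨by rw [hside0]; exact hx0, by rw [hside1]; exact hx1, ?_, ?_⟩
      · intro c hc hp
        have hc' : c ∈ x1 := by rw [← hside1]; exact hc
        have : (l c, r c) ∈ relOf l r x0 :=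
          hcr1 (l c, r c) ⟨c, hc', rfl⟩ (by rw [hlmap.2]; exact hp)
        obtain ⟨c', hc'0, heq⟩ := this
        have h1 : l c' = l c := (congrArg Prod.fst heq).symm
        have h2 : r c' = r c := (congrArg Prod.snd heq).symm
        have : c' = c := hmono c' c h1 h2
        subst this
        exact Or.inl ⟨c', hc'0, rfl⟩
      · intro c hc hp
        have hc' : c ∈ x0 := by rw [← hside0]; exact hc
        have : (l c, r c) ∈ relOf l r x1 :=
          hcr2 (l c, r c) ⟨c, hc', rfl⟩ (by rw [hlmap.2]; exact hp)
        obtain ⟨c', hc'1, heq⟩ := this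
        have h1 : l c' = l c := (congrArg Prod.fst heq).symm
        have h2 : r c' = r c := (congrArg Prod.snd heq).symm
        have : c' = c := hmono c' c h1 h2
        subst this
        exact Or.inr ⟨c', hc'1, rfl⟩
    refine ⟨x, hx, ?_⟩
    show θ = relOf (ccMap l) (ccMap r) x
    rw [relOf_cc, hside0, hside1]
    exact hθ

end SCC

section RelMore
variable {E F : Type u}

lemma relInv_relInv (θ : Rel2 E) : relInv (relInv θ) = θ := by
  ext p
  constructor
  · rintro ⟨q, ⟨s, hs, hq⟩, hp⟩
    have : p = s := by rw [← hp, ← hq]; rfl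
    rw [this]; exact hs
  · intro hp
    exact ⟨p.swap, ⟨p, hp, rfl⟩, by simp⟩

lemma rdom_relInv (θ : Rel2 E) : rdom (relInv θ) = rran θ := by
  ext a
  constructor
  · rintro ⟨p, ⟨q, hq, hp⟩, ha⟩
    exact ⟨q, hq, by rw [← ha, ← hp]; rfl⟩
  · rintro ⟨q, hq, ha⟩
    exact ⟨q.swap, ⟨q, hq, rfl⟩, ha⟩

lemma rran_relInv (θ : Rel2 E) : rran (relInv θ) = rdom θ := by
  ext a
  constructor
  · rintro ⟨p, ⟨q, hq, hp⟩, ha⟩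
    exact ⟨q, hq, by rw [← ha, ← hp]; rfl⟩
  · rintro ⟨q, hq, ha⟩
    exact ⟨q.swap, ⟨q, hq, rfl⟩, ha⟩

lemma relInv_mono {θ ψ : Rel2 E} (h : θ ⊆ ψ) : relInv θ ⊆ relInv ψ := by
  rintro p ⟨q, hq, hp⟩
  exact ⟨q, h hq, hp⟩

lemma mem_relInv {θ : Rel2 E} {a b : E} : (a, b) ∈ relInv θ ↔ (b, a) ∈ θ := by
  constructor
  · rintro ⟨q, hq, hp⟩
    have h1 : q.2 = a := congrArg Prod.fst hp
    have h2 : q.1 = b := congrArg Prod.snd hp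
    rw [← h1, ← h2]; exact hq
  · intro h
    exact ⟨(b, a), h, rfl⟩

/-- Generic: members of `famOf` are bijections with configuration dom/ran. -/
lemma famOf_basic {Et : ES F} {B : ES E} {l r : F → E}
    (hlmap : IsMap Et B l) (hrmap : IsMap Et B r)
    {θ : Rel2 E} (hθ : θ ∈ famOf Et l r) :
    relBij θ ∧ Config B (rdom θ) ∧ Config B (rran θ) := by
  obtain ⟨x, hx, hrel⟩ := hθ
  subst hrel
  refine ⟨?_, ?_, ?_⟩
  · rintro ⟨a, b⟩ ⟨aa, haa, heq⟩ ⟨c, d⟩ ⟨bb, hbb, heq'⟩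
    have ha : a = l aa := congrArg Prod.fst heq
    have hb : b = r aa := congrArg Prod.snd heq
    have hc : c = l bb := congrArg Prod.fst heq'
    have hd : d = r bb := congrArg Prod.snd heq'
    subst ha hb hc hd
    constructor
    · intro h
      have : aa = bb := hlmap.2 x hx aa haa bb hbb h
      rw [this]
    · intro h
      have : aa = bb := hrmap.2 x hx aa haa bb hbb h
      rw [this]
  · rw [show rdom {p | ∃ aa ∈ x, p = (l aa, r aa)} = l '' x from rdom_relOf l r x]
    exact hlmap.1 x hx
  · rw [show rran {p | ∃ aa ∈ x, p = (l aa, r aa)} = r '' x from rran_relOf l r x]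
    exact hrmap.1 x hx

/-- Generic restriction property of `famOf`. -/
lemma famOf_restrict {Et : ES F} {B : ES E} {l r : F → E}
    (hlrig : ∀ a a', Et.le a a' → B.le (l a) (l a'))
    {θ : Rel2 E} (hθ : θ ∈ famOf Et l r) {x : Set E} (hx : Config B x) :
    relRestrict θ x ∈ famOf Et l r := by
  obtain ⟨xt, hxt, hrel⟩ := hθ
  subst hrel
  refine ⟨{aa | aa ∈ xt ∧ l aa ∈ x}, ⟨Et.con_mono (fun a ha => ha.1) hxt.1, ?_⟩, ?_⟩
  · intro e he e' hle
    exact ⟨hxt.2 he.1 hle, hx.2 he.2 (hlrig _ _ hle)⟩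
  · ext p
    constructor
    · rintro ⟨⟨aa, haa, heq⟩, hl⟩
      refine ⟨aa, ⟨haa, ?_⟩, heq⟩
      have : p.1 = l aa := by rw [heq]
      rw [← this]
      exact hl
    · rintro ⟨aa, ⟨haa, hl⟩, heq⟩
      refine ⟨⟨aa, haa, heq⟩, ?_⟩
      have : p.1 = l aa := by rw [heq]
      rw [this]
      exact hl

/-- Generic extension property of `famOf` via openness of the left leg. -/
lemma famOf_extend {Et : ES F} {B : ES E} {l r : F → E}
    (hlopen : OpenMap Et B l)
    {θ : Rel2 E} (hθ : θ ∈ famOf Et l r) {x' : Set E} (hx' : Config B x')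
    (hsub : rdom θ ⊆ x') :
    ∃ θ' ∈ famOf Et l r, θ ⊆ θ' ∧ rdom θ' = x' := by
  obtain ⟨xt, hxt, hrel⟩ := hθ
  have hsub' : l '' xt ⊆ x' := by
    rw [← rdom_relOf l r xt]
    rw [hrel] at hsub
    exact hsub
  obtain ⟨xt', hxt', hsubt, him⟩ := hlopen.2 xt x' hxt hx' hsub'
  refine ⟨relOf l r xt', ⟨xt', hxt', rfl⟩, ?_, ?_⟩
  · rw [hrel]
    exact relOf_mono hsubt
  · rw [rdom_relOf]
    exact him

end RelMore

section SCCFam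
variable {EA EAt : Type u} {A : ESP EA} {At : ESP EAt} {l r : EAt → EA}
  {CA : ESP (Bool × EA)} {CAt : ESP (Bool × EAt)}

/-- members of the At-family preserve polarity pairwise -/
lemma S_polpair (hlmap : IsESPMap At A l) (hrmap : IsESPMap At A r)
    {θ : Rel2 EA} (hθ : θ ∈ famOf At.toES l r) :
    ∀ p ∈ θ, A.pol p.1 = A.pol p.2 := by
  obtain ⟨x, hx, hrel⟩ := hθ
  subst hrel
  rintro p ⟨aa, haa, heq⟩
  have h1 : p.1 = l aa := congrArg Prod.fst heq
  have h2 : p.2 = r aa := congrArg Prod.snd heq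
  rw [h1, h2, hlmap.2, hrmap.2]

lemma mem_relId {E : Type u} {x : Set E} {a b : E} :
    (a, b) ∈ relId x ↔ a ∈ x ∧ b = a := by
  constructor
  · rintro ⟨c, hc, heq⟩
    simp only [Prod.mk.injEq] at heq
    obtain ⟨h1, h2⟩ := heq
    subst h1; subst h2
    exact ⟨hc, rfl⟩
  · rintro ⟨ha, hba⟩
    rw [hba]
    exact ⟨a, ha, rfl⟩

lemma asm_mix_ft {θ₀ θ₁ : Rel2 EA} {a b : EA} :
    ((false, a), (true, b)) ∉ asm θ₀ θ₁ := by
  intro h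
  rcases asm_cases h with ⟨i, c, d, hP, _⟩
  have h1 : (false : Bool) = i := congrArg (Prod.fst ∘ Prod.fst) hP
  have h2 : (true : Bool) = i := congrArg (Prod.fst ∘ Prod.snd) hP
  rw [← h1] at h2
  exact absurd h2 (by simp)

lemma asm_mix_tf {θ₀ θ₁ : Rel2 EA} {a b : EA} :
    ((true, a), (false, b)) ∉ asm θ₀ θ₁ := by
  intro h
  rcases asm_cases h with ⟨i, c, d, hP, _⟩
  have h1 : (true : Bool) = i := congrArg (Prod.fst ∘ Prod.fst) hP
  have h2 : (false : Bool) = i := congrArg (Prod.fst ∘ Prod.snd) hP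
  rw [← h1] at h2
  exact absurd h2 (by simp)

lemma relInv_asm (θ₀ θ₁ : Rel2 EA) :
    relInv (asm θ₀ θ₁) = asm (relInv θ₀) (relInv θ₁) := by
  ext ⟨⟨i, a⟩, ⟨j, b⟩⟩
  cases i <;> cases j
  · rw [mem_relInv, asm_mem_false, asm_mem_false, mem_relInv]
  · exact iff_of_false (fun h => asm_mix_tf (mem_relInv.mp h)) asm_mix_ft
  · exact iff_of_false (fun h => asm_mix_ft (mem_relInv.mp h)) asm_mix_tf
  · rw [mem_relInv, asm_mem_true, asm_mem_true, mem_relInv]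

lemma relComp_asm (θ₀ θ₁ ψ₀ ψ₁ : Rel2 EA) :
    relComp (asm θ₀ θ₁) (asm ψ₀ ψ₁) = asm (relComp θ₀ ψ₀) (relComp θ₁ ψ₁) := by
  ext ⟨⟨i, a⟩, ⟨j, b⟩⟩
  constructor
  · rintro ⟨⟨k, c⟩, h1, h2⟩
    cases i <;> cases k
    · cases j
      · rw [asm_mem_false] at h1 h2 ⊢
        exact ⟨c, h1, h2⟩
      · exact absurd h2 asm_mix_ft
    · exact absurd h1 asm_mix_ft
    · exact absurd h1 asm_mix_tf
    · cases j
      · exact absurd h2 asm_mix_tf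
      · rw [asm_mem_true] at h1 h2 ⊢
        exact ⟨c, h1, h2⟩
  · intro h
    cases i <;> cases j
    · rw [asm_mem_false] at h
      obtain ⟨c, h1, h2⟩ := h
      exact ⟨(false, c), asm_mem_false.mpr h1, asm_mem_false.mpr h2⟩
    · exact absurd h asm_mix_ft
    · exact absurd h asm_mix_tf
    · rw [asm_mem_true] at h
      obtain ⟨c, h1, h2⟩ := h
      exact ⟨(true, c), asm_mem_true.mpr h1, asm_mem_true.mpr h2⟩

lemma mem_relId' {E : Type u} {x : Set E} {a b : E} :
    (a, b) ∈ relId x ↔ a ∈ x ∧ b = a := mem_relId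

lemma relId_split (x : Set (Bool × EA)) :
    relId x = asm (relId (sideS false x)) (relId (sideS true x)) := by
  ext ⟨⟨i, a⟩, ⟨j, b⟩⟩
  constructor
  · rintro ⟨⟨k, c⟩, hc, heq⟩
    simp only [Prod.mk.injEq] at heq
    obtain ⟨⟨h1, h2⟩, h3, h4⟩ := heq
    subst h1; subst h2; subst h3; subst h4
    cases k
    · exact asm_mem_false.mpr (mem_relId.mpr ⟨hc, rfl⟩)
    · exact asm_mem_true.mpr (mem_relId.mpr ⟨hc, rfl⟩)
  · intro h
    cases i <;> cases j
    · rw [asm_mem_false, mem_relId] at h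
      obtain ⟨hc, hba⟩ := h
      rw [hba]
      exact ⟨(false, a), hc, rfl⟩
    · exact absurd h asm_mix_ft
    · exact absurd h asm_mix_tf
    · rw [asm_mem_true, mem_relId] at h
      obtain ⟨hc, hba⟩ := h
      rw [hba]
      exact ⟨(true, a), hc, rfl⟩

end SCCFam

section SCCClosure
variable {EA EAt : Type u} {A : ESP EA} {At : ESP EAt} {l r : EAt → EA}
  {CA : ESP (Bool × EA)} {CAt : ESP (Bool × EAt)}

lemma mem_rdom_asm_false {θ₀ θ₁ : Rel2 EA} {a : EA} :
    ((false : Bool), a) ∈ rdom (asm θ₀ θ₁) ↔ a ∈ rdom θ₀ := by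
  constructor
  · rintro ⟨P, hP, h1⟩
    rcases asm_cases hP with ⟨k, c, d, hPe, hk⟩
    subst hPe
    simp only at h1
    have e1 : k = false := congrArg Prod.fst h1
    have e2 : c = a := congrArg Prod.snd h1
    subst e1; subst e2
    rcases hk with ⟨_, hm⟩ | ⟨hk, _⟩
    · exact ⟨(c, d), hm, rfl⟩
    · exact absurd hk (by simp)
  · rintro ⟨p, hp, h1⟩
    refine ⟨((false, p.1), (false, p.2)), asm_mem_false.mpr (by simpa using hp), by simp [h1]⟩

lemma mem_rdom_asm_true {θ₀ θ₁ : Rel2 EA} {a : EA} :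
    ((true : Bool), a) ∈ rdom (asm θ₀ θ₁) ↔ a ∈ rdom θ₁ := by
  constructor
  · rintro ⟨P, hP, h1⟩
    rcases asm_cases hP with ⟨k, c, d, hPe, hk⟩
    subst hPe
    simp only at h1
    have e1 : k = true := congrArg Prod.fst h1
    have e2 : c = a := congrArg Prod.snd h1
    subst e1; subst e2
    rcases hk with ⟨hk, _⟩ | ⟨_, hm⟩
    · exact absurd hk (by simp)
    · exact ⟨(c, d), hm, rfl⟩
  · rintro ⟨p, hp, h1⟩
    refine ⟨((true, p.1), (true, p.2)), asm_mem_true.mpr (by simpa using hp), by simp [h1]⟩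

lemma mem_rran_asm_false {θ₀ θ₁ : Rel2 EA} {a : EA} :
    ((false : Bool), a) ∈ rran (asm θ₀ θ₁) ↔ a ∈ rran θ₀ := by
  constructor
  · rintro ⟨P, hP, h1⟩
    rcases asm_cases hP with ⟨k, c, d, hPe, hk⟩
    subst hPe
    simp only at h1
    have e1 : k = false := congrArg Prod.fst h1
    have e2 : d = a := congrArg Prod.snd h1
    subst e1; subst e2
    rcases hk with ⟨_, hm⟩ | ⟨hk, _⟩
    · exact ⟨(c, d), hm, rfl⟩
    · exact absurd hk (by simp)
  · rintro ⟨p, hp, h1⟩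
    refine ⟨((false, p.1), (false, p.2)), asm_mem_false.mpr (by simpa using hp), by simp [h1]⟩

lemma mem_rran_asm_true {θ₀ θ₁ : Rel2 EA} {a : EA} :
    ((true : Bool), a) ∈ rran (asm θ₀ θ₁) ↔ a ∈ rran θ₁ := by
  constructor
  · rintro ⟨P, hP, h1⟩
    rcases asm_cases hP with ⟨k, c, d, hPe, hk⟩
    subst hPe
    simp only at h1
    have e1 : k = true := congrArg Prod.fst h1
    have e2 : d = a := congrArg Prod.snd h1
    subst e1; subst e2
    rcases hk with ⟨hk, _⟩ | ⟨_, hm⟩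
    · exact absurd hk (by simp)
    · exact ⟨(c, d), hm, rfl⟩
  · rintro ⟨p, hp, h1⟩
    refine ⟨((true, p.1), (true, p.2)), asm_mem_true.mpr (by simpa using hp), by simp [h1]⟩

lemma SCC_inv (hCAt : IsCopycatOf At CAt) (hlmap : IsESPMap At A l)
    (hrmap : IsESPMap At A r)
    (hmono : ∀ aa aa', l aa = l aa' → r aa = r aa' → aa = aa')
    (hSinv : ∀ θ ∈ famOf At.toES l r, relInv θ ∈ famOf At.toES l r)
    {θ : Rel2 (Bool × EA)} (hθ : θ ∈ famOf CAt.toES (ccMap l) (ccMap r)) :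
    relInv θ ∈ famOf CAt.toES (ccMap l) (ccMap r) := by
  rw [scc_char hCAt hlmap hrmap hmono] at hθ ⊢
  obtain ⟨θ₀, h0, θ₁, h1, hθeq, c1, c2⟩ := hθ
  refine ⟨relInv θ₀, hSinv _ h0, relInv θ₁, hSinv _ h1, by rw [hθeq, relInv_asm], ?_, ?_⟩
  · rintro ⟨a, b⟩ hm hpol
    rw [mem_relInv] at hm ⊢
    have hba : A.pol b = A.pol a := S_polpair hlmap hrmap h1 (b, a) hm
    exact c1 (b, a) hm (by rw [hba]; exact hpol)
  · rintro ⟨a, b⟩ hm hpol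
    rw [mem_relInv] at hm ⊢
    have hba : A.pol b = A.pol a := S_polpair hlmap hrmap h0 (b, a) hm
    exact c2 (b, a) hm (by rw [hba]; exact hpol)

lemma SCC_id (hCA : IsCopycatOf A CA) (hCAt : IsCopycatOf At CAt)
    (hlmap : IsESPMap At A l) (hrmap : IsESPMap At A r)
    (hmono : ∀ aa aa', l aa = l aa' → r aa = r aa' → aa = aa')
    (hSid : ∀ x, Config A.toES x → relId x ∈ famOf At.toES l r)
    {x : Set (Bool × EA)} (hx : Config CA.toES x) :
    relId x ∈ famOf CAt.toES (ccMap l) (ccMap r) := by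
  rw [scc_char hCAt hlmap hrmap hmono]
  have hxOK := (config_cc_iff hCA _).mp hx
  refine ⟨relId (sideS false x), hSid _ hxOK.1, relId (sideS true x), hSid _ hxOK.2.1,
    relId_split x, ?_, ?_⟩
  · rintro ⟨a, b⟩ hm hpol
    obtain ⟨ha, hba⟩ := mem_relId.mp hm
    exact mem_relId.mpr ⟨hxOK.2.2.1 a ha hpol, hba⟩
  · rintro ⟨a, b⟩ hm hpol
    obtain ⟨ha, hba⟩ := mem_relId.mp hm
    exact mem_relId.mpr ⟨hxOK.2.2.2 a ha hpol, hba⟩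

lemma SCC_comp (hCAt : IsCopycatOf At CAt) (hlmap : IsESPMap At A l)
    (hrmap : IsESPMap At A r)
    (hmono : ∀ aa aa', l aa = l aa' → r aa = r aa' → aa = aa')
    (hScomp : ∀ θ ∈ famOf At.toES l r, ∀ θ' ∈ famOf At.toES l r,
      rran θ = rdom θ' → relComp θ θ' ∈ famOf At.toES l r)
    {θ θ' : Rel2 (Bool × EA)} (hθ : θ ∈ famOf CAt.toES (ccMap l) (ccMap r))
    (hθ' : θ' ∈ famOf CAt.toES (ccMap l) (ccMap r)) (hrd : rran θ = rdom θ') :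
    relComp θ θ' ∈ famOf CAt.toES (ccMap l) (ccMap r) := by
  rw [scc_char hCAt hlmap hrmap hmono] at hθ hθ' ⊢
  obtain ⟨θ₀, h0, θ₁, h1, hθeq, c1, c2⟩ := hθ
  obtain ⟨ψ₀, g0, ψ₁, g1, hθ'eq, d1, d2⟩ := hθ'
  subst hθeq hθ'eq
  have hside0 : rran θ₀ = rdom ψ₀ := by
    ext a
    rw [← mem_rran_asm_false (θ₁ := θ₁), hrd, mem_rdom_asm_false]
  have hside1 : rran θ₁ = rdom ψ₁ := by
    ext a
    rw [← mem_rran_asm_true (θ₀ := θ₀), hrd, mem_rdom_asm_true]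
  refine ⟨relComp θ₀ ψ₀, hScomp _ h0 _ g0 hside0, relComp θ₁ ψ₁, hScomp _ h1 _ g1 hside1,
    relComp_asm θ₀ θ₁ ψ₀ ψ₁, ?_, ?_⟩
  · rintro ⟨a, b⟩ ⟨c, hm1, hm2⟩ hpol
    have hca : A.pol c = A.pol a := (S_polpair hlmap hrmap h1 (a, c) hm1).symm
    exact ⟨c, c1 (a, c) hm1 hpol, d1 (c, b) hm2 (by rw [hca]; exact hpol)⟩
  · rintro ⟨a, b⟩ ⟨c, hm1, hm2⟩ hpol
    have hca : A.pol c = A.pol a := (S_polpair hlmap hrmap h0 (a, c) hm1).symm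
    exact ⟨c, c2 (a, c) hm1 hpol, d2 (c, b) hm2 (by rw [hca]; exact hpol)⟩

lemma ccMono (hmono : ∀ aa aa', l aa = l aa' → r aa = r aa' → aa = aa') :
    ∀ p q : Bool × EAt, ccMap l p = ccMap l q → ccMap r p = ccMap r q → p = q := by
  rintro ⟨i, a⟩ ⟨j, b⟩ h1 h2
  have e1 : i = j := congrArg Prod.fst h1
  have e2 : l a = l b := congrArg Prod.snd h1
  have e3 : r a = r b := congrArg Prod.snd h2
  subst e1
  rw [hmono a b e2 e3]

lemma ccMap_r_open (hCA : IsCopycatOf A CA) (hCAt : IsCopycatOf At CAt)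
    (hlmap : IsESPMap At A l) (hrmap : IsESPMap At A r)
    (hmono : ∀ aa aa', l aa = l aa' → r aa = r aa' → aa = aa')
    (hSinv : ∀ θ ∈ famOf At.toES l r, relInv θ ∈ famOf At.toES l r)
    (hropen : OpenMap At.toES A.toES r)
    (hlccopen : OpenMap CAt.toES CA.toES (ccMap l)) :
    OpenMap CAt.toES CA.toES (ccMap r) := by
  constructor
  · exact ⟨⟨fun x hx => ccMap_config hCA hCAt hrmap hx,
      fun x hx => ccMap_inj hCAt hrmap hx⟩, ccMap_rigid hCA hCAt hropen.1.2 hrmap.2⟩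
  · intro x y hx hy hsub
    have hθ : relOf (ccMap l) (ccMap r) x ∈ famOf CAt.toES (ccMap l) (ccMap r) :=
      ⟨x, hx, rfl⟩
    obtain ⟨u, hu, hueq'⟩ := SCC_inv hCAt hlmap hrmap hmono hSinv hθ
    have hueq : relInv (relOf (ccMap l) (ccMap r) x) = relOf (ccMap l) (ccMap r) u := hueq'
    have hlu : ccMap l '' u ⊆ y := by
      rw [← rdom_relOf (ccMap l) (ccMap r) u, ← hueq, rdom_relInv, rran_relOf]
      exact hsub
    obtain ⟨u', hu', huu', himu'⟩ := hlccopen.2 u y hu hy hlu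
    have hθ' : relOf (ccMap l) (ccMap r) u' ∈ famOf CAt.toES (ccMap l) (ccMap r) :=
      ⟨u', hu', rfl⟩
    obtain ⟨v, hv, hveq'⟩ := SCC_inv hCAt hlmap hrmap hmono hSinv hθ'
    have hveq : relInv (relOf (ccMap l) (ccMap r) u') = relOf (ccMap l) (ccMap r) v := hveq'
    have hsubrel : relOf (ccMap l) (ccMap r) x ⊆ relOf (ccMap l) (ccMap r) v := by
      have h1 : relInv (relOf (ccMap l) (ccMap r) x) ⊆ relOf (ccMap l) (ccMap r) u' := by
        rw [hueq]
        exact relOf_mono huu'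
      have h2 := relInv_mono h1
      rw [relInv_relInv] at h2
      rw [← hveq]
      exact h2
    refine ⟨v, hv, ?_, ?_⟩
    · intro p hp
      have : (ccMap l p, ccMap r p) ∈ relOf (ccMap l) (ccMap r) v :=
        hsubrel ⟨p, hp, rfl⟩
      obtain ⟨q, hq, heq⟩ := this
      have e1 : ccMap l p = ccMap l q := congrArg Prod.fst heq
      have e2 : ccMap r p = ccMap r q := congrArg Prod.snd heq
      rw [ccMono hmono p q e1 e2]
      exact hq
    · have : ccMap r '' v = rran (relOf (ccMap l) (ccMap r) v) := (rran_relOf _ _ _).symm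
      rw [this, ← hveq, rran_relInv, rdom_relOf]
      exact himu'

end SCCClosure

section Path
variable {E : Type u}

lemma ccLe_cases (B : ESP E) {p q : Bool × E} (h : ccLe B p q) :
    (p.1 = q.1 ∧ B.le p.2 q.2) ∨
    (∃ c, ccLe B p (!q.1, c) ∧ ccPol B (q.1, c) = true ∧ B.le c q.2) := by
  induction h with
  | refl => exact Or.inl ⟨rfl, B.le_refl _⟩
  | @tail b q hpb hbase ih =>
    rcases hbase with ⟨h1, hle⟩ | ⟨h2, hne, hpol⟩
    · rcases ih with ⟨e1, e2⟩ | ⟨c, hc1, hc2, hc3⟩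
      · exact Or.inl ⟨e1.trans h1, B.le_trans e2 hle⟩
      · refine Or.inr ⟨c, ?_, ?_, B.le_trans hc3 hle⟩
        · rw [← h1]; exact hc1
        · rw [← h1]; exact hc2
    · refine Or.inr ⟨q.2, ?_, ?_, B.le_refl _⟩
      · have hb1 : b.1 = !q.1 := by
          cases hb : b.1 <;> cases hq : q.1 <;> simp_all
        have hb : b = (!q.1, q.2) := Prod.ext hb1 h2
        rw [← hb]
        exact hpb
      · have : (q.1, q.2) = q := rfl
        rw [this]
        exact hpol

end Path

section Strat
variable {EA EAt : Type u} {A : ESP EA} {At : ESP EAt} {l r : EAt → EA}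
  {CA : ESP (Bool × EA)} {CAt : ESP (Bool × EAt)} {Gm : ESP (EA ⊕ EA)}

lemma ccToGame_apply_false (a : EA) : (ccToGame (false, a) : EA ⊕ EA) = Sum.inl a := rfl
lemma ccToGame_apply_true (a : EA) : (ccToGame (true, a) : EA ⊕ EA) = Sum.inr a := rfl

lemma ccToGame_inj : Function.Injective (ccToGame : Bool × EA → EA ⊕ EA) := by
  rintro ⟨i, a⟩ ⟨j, b⟩ h
  cases i <;> cases j <;> simp [ccToGame] at h <;> simp [h]

lemma mem_ccToGame_inl {x : Set (Bool × EA)} {a : EA} :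
    Sum.inl a ∈ (ccToGame '' x : Set (EA ⊕ EA)) ↔ (false, a) ∈ x := by
  constructor
  · rintro ⟨⟨i, b⟩, hb, heq⟩
    cases i
    · rw [ccToGame_apply_false] at heq
      rw [← Sum.inl_injective heq]
      exact hb
    · rw [ccToGame_apply_true] at heq
      exact absurd heq (by simp)
  · intro h
    exact ⟨(false, a), h, rfl⟩

lemma mem_ccToGame_inr {x : Set (Bool × EA)} {a : EA} :
    Sum.inr a ∈ (ccToGame '' x : Set (EA ⊕ EA)) ↔ (true, a) ∈ x := by
  constructor
  · rintro ⟨⟨i, b⟩, hb, heq⟩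
    cases i
    · rw [ccToGame_apply_false] at heq
      exact absurd heq (by simp)
    · rw [ccToGame_apply_true] at heq
      rw [← Sum.inr_injective heq]
      exact hb
  · intro h
    exact ⟨(true, a), h, rfl⟩

lemma ccToGame_espmap (hCA : IsCopycatOf A CA) (hGm : IsParESP A.dual A Gm) :
    IsESPMap CA Gm (ccToGame : Bool × EA → EA ⊕ EA) := by
  have hle : ∀ e e', Gm.le e e' ↔ Sum.LiftRel A.toES.le A.toES.le e e' := hGm.1.1
  have hcon : ∀ X, X ∈ Gm.Con ↔ X.Finite ∧ (Sum.inl ⁻¹' X) ∈ A.toES.Con ∧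
      (Sum.inr ⁻¹' X) ∈ A.toES.Con := hGm.1.2
  refine ⟨⟨?_, ?_⟩, ?_⟩
  · intro x hx
    have hxOK := (config_cc_iff hCA _).mp hx
    have hpre_l : Sum.inl ⁻¹' (ccToGame '' x : Set (EA ⊕ EA)) = sideS false x := by
      ext a
      exact mem_ccToGame_inl
    have hpre_r : Sum.inr ⁻¹' (ccToGame '' x : Set (EA ⊕ EA)) = sideS true x := by
      ext a
      exact mem_ccToGame_inr
    refine ⟨?_, ?_⟩
    · rw [hcon]
      refine ⟨(config_finite _ hx).image _, ?_, ?_⟩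
      · rw [hpre_l]; exact hxOK.1.1
      · rw [hpre_r]; exact hxOK.2.1.1
    · intro e he e' hle'
      have hlift := (hle e' e).mp hle'
      cases hlift with
      | inl h =>
        rename_i a' a
        have : (false, a) ∈ x := mem_ccToGame_inl.mp he
        exact mem_ccToGame_inl.mpr (hxOK.1.2 this h)
      | inr h =>
        rename_i a' a
        have : (true, a) ∈ x := mem_ccToGame_inr.mp he
        exact mem_ccToGame_inr.mpr (hxOK.2.1.2 this h)
  · intro x _ e _ e' _ h
    exact ccToGame_inj h
  · rintro ⟨i, a⟩
    rw [hCA.2.2]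
    cases i
    · rw [ccToGame_apply_false, hGm.2.1]
      rfl
    · rw [ccToGame_apply_true, hGm.2.2]
      rfl

lemma courteous_cc (hCA : IsCopycatOf A CA) (hGm : IsParESP A.dual A Gm) :
    Courteous CA Gm (ccToGame : Bool × EA → EA ⊕ EA) := by
  intro s₁ s₂ hImm hpolhyp
  obtain ⟨⟨hle, hne⟩, hmid⟩ := hImm
  have hgle : ∀ e e', Gm.le e e' ↔ Sum.LiftRel A.toES.le A.toES.le e e' := hGm.1.1
  have ccle : ccLe A s₁ s₂ := (hCA.1 _ _).mp hle
  rcases ccLe_cases A ccle with ⟨hfst, hsnd⟩ | ⟨c, hc1, hcpol, hc3⟩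
  · -- same side
    have hab_ne : s₁.2 ≠ s₂.2 := by
      intro h
      exact hne (Prod.ext hfst h)
    have haImm : Imm A.toES s₁.2 s₂.2 := by
      refine ⟨⟨hsnd, hab_ne⟩, ?_⟩
      intro c hc1 hc2
      refine hmid (s₁.1, c) ⟨?_, ?_⟩ ⟨?_, ?_⟩
      · exact (hCA.1 _ _).mpr (Relation.ReflTransGen.single (Or.inl ⟨rfl, hc1.1⟩))
      · intro h
        exact hc1.2 (congrArg Prod.snd h)
      · exact (hCA.1 _ _).mpr (Relation.ReflTransGen.single (Or.inl ⟨hfst, hc2.1⟩))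
      · intro h
        exact hc2.2 (congrArg Prod.snd h)
    obtain ⟨i, a⟩ := s₁
    obtain ⟨j, b⟩ := s₂
    simp only at hfst hab_ne
    subst hfst
    cases i
    · -- both on left : Sum.inl
      refine ⟨⟨(hgle _ _).mpr (Sum.LiftRel.inl haImm.1.1), by simp [ccToGame, hab_ne]⟩, ?_⟩
      intro e'' h1 h2
      have hl1 := (hgle _ _).mp h1.1
      cases hl1 with
      | inl h =>
        rename_i c
        have hl2 := (hgle _ _).mp h2.1
        cases hl2 with
        | inl h' =>
          refine haImm.2 c ⟨h, ?_⟩ ⟨h', ?_⟩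
          · intro hac
            exact h1.2 (by rw [ccToGame_apply_false]; exact congrArg Sum.inl hac)
          · intro hcb
            exact h2.2 (by rw [ccToGame_apply_false]; exact congrArg Sum.inl hcb)
    · refine ⟨⟨(hgle _ _).mpr (Sum.LiftRel.inr haImm.1.1), by simp [ccToGame, hab_ne]⟩, ?_⟩
      intro e'' h1 h2
      have hl1 := (hgle _ _).mp h1.1
      cases hl1 with
      | inr h =>
        rename_i c
        have hl2 := (hgle _ _).mp h2.1
        cases hl2 with
        | inr h' =>
          refine haImm.2 c ⟨h, ?_⟩ ⟨h', ?_⟩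
          · intro hac
            exact h1.2 (by rw [ccToGame_apply_true]; exact congrArg Sum.inr hac)
          · intro hcb
            exact h2.2 (by rw [ccToGame_apply_true]; exact congrArg Sum.inr hcb)
  · -- crossing case: contradiction
    exfalso
    have hnotj : (!s₂.1) ≠ s₂.1 := by cases s₂.1 <;> simp
    have hm'm : CA.le (!s₂.1, c) (s₂.1, c) :=
      (hCA.1 _ _).mpr (Relation.ReflTransGen.single (Or.inr ⟨rfl, hnotj, hcpol⟩))
    have hmq : CA.le (s₂.1, c) s₂ := by
      have : CA.le (s₂.1, c) (s₂.1, s₂.2) :=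
        (hCA.1 _ _).mpr (Relation.ReflTransGen.single (Or.inl ⟨rfl, hc3⟩))
      have heta : (s₂.1, s₂.2) = s₂ := rfl
      rwa [heta] at this
    have hs1m' : CA.le s₁ (!s₂.1, c) := (hCA.1 _ _).mpr hc1
    by_cases hms2 : (s₂.1, c) = s₂
    · -- m = s₂
      by_cases hs1m' : s₁ = (!s₂.1, c)
      · -- s₁ is the mirror: polarity contradiction
        have hps1 : CA.pol s₁ = false := by
          rw [hCA.2.2, hs1m', ccPol_flip]
          rw [hcpol]
          rfl
        have hps2 : CA.pol s₂ = true := by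
          rw [hCA.2.2, ← hms2]
          exact hcpol
        rcases hpolhyp with h | h
        · rw [hps1] at h; exact absurd h (by simp)
        · rw [hps2] at h; exact absurd h (by simp)
      · refine hmid (!s₂.1, c) ⟨(hCA.1 _ _).mpr hc1, hs1m'⟩ ⟨?_, ?_⟩
        · rw [← hms2]
          exact hm'm
        · intro h
          rw [← hms2] at h
          exact hnotj (congrArg Prod.fst h)
    · -- m ≠ s₂
      have hs1ne : s₁ ≠ (s₂.1, c) := by
        intro h
        have h1 : CA.le (s₂.1, c) (!s₂.1, c) := by rw [← h]; exact hs1m'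
        have h2 : (s₂.1, c) = (!s₂.1, c) := CA.le_antisymm h1 hm'm
        exact hnotj (congrArg Prod.fst h2).symm
      exact hmid (s₂.1, c) ⟨CA.le_trans hs1m' hm'm, hs1ne⟩ ⟨hmq, hms2⟩

end Strat

section FamP
variable {EA EAt : Type u} {A : ESP EA} {At : ESP EAt} {l r : EAt → EA}
  {CA : ESP (Bool × EA)} {CAt : ESP (Bool × EAt)} {Gm : ESP (EA ⊕ EA)}

lemma relMap_ccToGame_asm (θ₀ θ₁ : Rel2 EA) :
    relMap (ccToGame : Bool × EA → EA ⊕ EA) (asm θ₀ θ₁) =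
      relMap Sum.inl θ₀ ∪ relMap Sum.inr θ₁ := by
  ext P
  constructor
  · rintro ⟨Q, hQ, hP⟩
    rcases asm_cases hQ with ⟨i, a, b, hQe, hk⟩
    subst hQe
    cases i
    · rcases hk with ⟨_, hm⟩ | ⟨hk, _⟩
      · exact Or.inl ⟨(a, b), hm, hP⟩
      · exact absurd hk (by simp)
    · rcases hk with ⟨hk, _⟩ | ⟨_, hm⟩
      · exact absurd hk (by simp)
      · exact Or.inr ⟨(a, b), hm, hP⟩
  · rintro (⟨⟨a, b⟩, hm, hP⟩ | ⟨⟨a, b⟩, hm, hP⟩)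
    · exact ⟨((false, a), (false, b)), asm_mem_false.mpr hm, hP⟩
    · exact ⟨((true, a), (true, b)), asm_mem_true.mpr hm, hP⟩

lemma famPres_cc (hCAt : IsCopycatOf At CAt) (hlmap : IsESPMap At A l)
    (hrmap : IsESPMap At A r)
    (hmono : ∀ aa aa', l aa = l aa' → r aa = r aa' → aa = aa') :
    FamPres (famOf CAt.toES (ccMap l) (ccMap r))
      (parFam (famOf At.toES l r) (famOf At.toES l r))
      (ccToGame : Bool × EA → EA ⊕ EA) := by
  intro θ hθ
  rw [scc_char hCAt hlmap hrmap hmono] at hθ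
  obtain ⟨θ₀, h0, θ₁, h1, hθeq, _, _⟩ := hθ
  refine ⟨θ₀, h0, θ₁, h1, ?_⟩
  rw [hθeq, relMap_ccToGame_asm]

def extL (X : Rel2 (EA ⊕ EA)) : Rel2 EA := {p | (Sum.inl p.1, Sum.inl p.2) ∈ X}
def extR (X : Rel2 (EA ⊕ EA)) : Rel2 EA := {p | (Sum.inr p.1, Sum.inr p.2) ∈ X}

lemma extL_union_maps (θA θB : Rel2 EA) :
    extL (relMap Sum.inl θA ∪ relMap Sum.inr θB) = θA := by
  ext ⟨a, b⟩
  constructor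
  · rintro (⟨⟨c, d⟩, hm, heq⟩ | ⟨⟨c, d⟩, hm, heq⟩)
    · have h1 : Sum.inl c = Sum.inl a := congrArg Prod.fst heq
      have h2 : Sum.inl d = Sum.inl b := congrArg Prod.snd heq
      rw [← Sum.inl_injective h1, ← Sum.inl_injective h2]
      exact hm
    · exact absurd (congrArg Prod.fst heq) (by simp)
  · intro h
    exact Or.inl ⟨(a, b), h, rfl⟩

lemma extR_union_maps (θA θB : Rel2 EA) :
    extR (relMap Sum.inl θA ∪ relMap Sum.inr θB) = θB := by
  ext ⟨a, b⟩
  constructor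
  · rintro (⟨⟨c, d⟩, hm, heq⟩ | ⟨⟨c, d⟩, hm, heq⟩)
    · exact absurd (congrArg Prod.fst heq) (by simp)
    · have h1 : Sum.inr c = Sum.inr a := congrArg Prod.fst heq
      have h2 : Sum.inr d = Sum.inr b := congrArg Prod.snd heq
      rw [← Sum.inr_injective h1, ← Sum.inr_injective h2]
      exact hm
  · intro h
    exact Or.inr ⟨(a, b), h, rfl⟩

lemma extL_insert_inl (Y : Rel2 (EA ⊕ EA)) (a b : EA) :
    extL (insert (Sum.inl a, Sum.inl b) Y) = insert (a, b) (extL Y) := by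
  ext ⟨c, d⟩
  constructor
  · rintro (h | h)
    · simp only [Prod.mk.injEq] at h
      left
      rw [Sum.inl_injective h.1, Sum.inl_injective h.2]
    · exact Or.inr h
  · rintro (h | h)
    · simp only [Prod.mk.injEq] at h
      left
      rw [h.1, h.2]
    · exact Or.inr h

lemma extR_insert_inr (Y : Rel2 (EA ⊕ EA)) (a b : EA) :
    extR (insert (Sum.inr a, Sum.inr b) Y) = insert (a, b) (extR Y) := by
  ext ⟨c, d⟩
  constructor
  · rintro (h | h)
    · simp only [Prod.mk.injEq] at h
      left
      rw [Sum.inr_injective h.1, Sum.inr_injective h.2]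
    · exact Or.inr h
  · rintro (h | h)
    · simp only [Prod.mk.injEq] at h
      left
      rw [h.1, h.2]
    · exact Or.inr h

lemma strongrec_cc (hCAt : IsCopycatOf At CAt)
    (hlmap : IsESPMap At A l) (hrmap : IsESPMap At A r)
    (hmono : ∀ aa aa', l aa = l aa' → r aa = r aa' → aa = aa')
    (hGm : IsParESP A.dual A Gm) :
    StrongReceptive CA (famOf CAt.toES (ccMap l) (ccMap r)) Gm
      (parFam (famOf At.toES l r) (famOf At.toES l r))
      (ccToGame : Bool × EA → EA ⊕ EA) := by
  intro θ hθ a₁ a₂ hp1 hp2 hnotin hins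
  rw [scc_char hCAt hlmap hrmap hmono] at hθ
  obtain ⟨θ₀, h0, θ₁, h1, hθeq, c1, c2⟩ := hθ
  obtain ⟨θA, hA, θB, hB, hunion⟩ := hins
  have hmapeq : relMap (ccToGame : Bool × EA → EA ⊕ EA) θ =
      relMap Sum.inl θ₀ ∪ relMap Sum.inr θ₁ := by
    rw [hθeq, relMap_ccToGame_asm]
  have hmem : (a₁, a₂) ∈ relMap Sum.inl θA ∪ relMap Sum.inr θB := by
    rw [← hunion]; exact Set.mem_insert _ _
  rcases hmem with ⟨⟨a, a'⟩, hm, heq⟩ | ⟨⟨a, a'⟩, hm, heq⟩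
  · -- a₁, a₂ on the left component
    have ha1 : a₁ = Sum.inl a := (congrArg Prod.fst heq).symm
    have ha2 : a₂ = Sum.inl a' := (congrArg Prod.snd heq).symm
    have hextract : insert (a, a') θ₀ = θA := by
      have h := congrArg extL hunion
      rw [ha1, ha2] at h
      rw [extL_insert_inl, hmapeq, extL_union_maps, extL_union_maps] at h
      exact h
    have hpola : A.pol a = true := by
      have h := hGm.2.1 a
      rw [← ha1, hp1] at h
      have h' : (!(A.pol a)) = false := h.symm
      simpa using h'
    have hmemS : insert (a, a') θ₀ ∈ famOf At.toES l r := by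
      rw [hextract]; exact hA
    refine ⟨((false, a), (false, a')), ⟨?_, ?_, ?_⟩, ?_⟩
    · rw [scc_char hCAt hlmap hrmap hmono]
      refine ⟨insert (a, a') θ₀, hmemS, θ₁, h1, ?_, ?_, ?_⟩
      · rw [hθeq, ← asm_insert_false]
      · intro p hp hpol
        exact Set.mem_insert_of_mem _ (c1 p hp hpol)
      · rintro p (hp | hp) hpol
        · exfalso
          rw [hp] at hpol
          simp only at hpol
          rw [hpola] at hpol
          exact absurd hpol (by simp)
        · exact c2 p hp hpol
    · rw [ha1]; rfl
    · rw [ha2]; rfl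
    · rintro ⟨p1, p2⟩ ⟨_, hσ1, hσ2⟩
      have e1 : p1 = (false, a) := ccToGame_inj (by rw [hσ1, ha1]; rfl)
      have e2 : p2 = (false, a') := ccToGame_inj (by rw [hσ2, ha2]; rfl)
      rw [e1, e2]
  · -- a₁, a₂ on the right component
    have ha1 : a₁ = Sum.inr a := (congrArg Prod.fst heq).symm
    have ha2 : a₂ = Sum.inr a' := (congrArg Prod.snd heq).symm
    have hextract : insert (a, a') θ₁ = θB := by
      have h := congrArg extR hunion
      rw [ha1, ha2] at h
      rw [extR_insert_inr, hmapeq, extR_union_maps, extR_union_maps] at h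
      exact h
    have hpola : A.pol a = false := by
      have h := hGm.2.2 a
      rw [← ha1, hp1] at h
      exact h.symm
    have hmemS : insert (a, a') θ₁ ∈ famOf At.toES l r := by
      rw [hextract]; exact hB
    refine ⟨((true, a), (true, a')), ⟨?_, ?_, ?_⟩, ?_⟩
    · rw [scc_char hCAt hlmap hrmap hmono]
      refine ⟨θ₀, h0, insert (a, a') θ₁, hmemS, ?_, ?_, ?_⟩
      · rw [hθeq, ← asm_insert_true]
      · rintro p (hp | hp) hpol
        · exfalso
          rw [hp] at hpol
          simp only at hpol
          rw [hpola] at hpol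
          exact absurd hpol (by simp)
        · exact c1 p hp hpol
      · intro p hp hpol
        exact Set.mem_insert_of_mem _ (c2 p hp hpol)
    · rw [ha1]; rfl
    · rw [ha2]; rfl
    · rintro ⟨p1, p2⟩ ⟨_, hσ1, hσ2⟩
      have e1 : p1 = (true, a) := ccToGame_inj (by rw [hσ1, ha1]; rfl)
      have e2 : p2 = (true, a') := ccToGame_inj (by rw [hσ2, ha2]; rfl)
      rw [e1, e2]

end FamP

section Thin
variable {EA EAt : Type u} {A : ESP EA} {At : ESP EAt} {l r : EAt → EA}
  {CA : ESP (Bool × EA)} {CAt : ESP (Bool × EAt)}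

lemma sideS_union (i : Bool) (x y : Set (Bool × EAt)) :
    sideS i (x ∪ y) = sideS i x ∪ sideS i y := rfl

lemma refl_pos_compat_cc (hCA : IsCopycatOf A CA) (hCAt : IsCopycatOf At CAt)
    (hlmap : IsESPMap At A l) (hrace : MapPresRaces At A l) :
    ReflPosCompat CAt CA.toES (ccMap l) := by
  intro x x₁ x₂ hx hx₁ hx₂ hsub₁ hsub₂ hpos₁ hpos₂ hU
  have hUOK := (config_cc_iff hCA _).mp hU
  have hUside : ∀ i : Bool, Config A.toES (sideS i (ccMap l '' x₁ ∪ ccMap l '' x₂)) := by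
    intro i; cases i; exacts [hUOK.1, hUOK.2.1]
  have hx₂fin : x₂.Finite := config_finite _ hx₂
  suffices h : ∀ n : ℕ, ∀ w : Set (Bool × EAt), Config CAt.toES w → x₁ ⊆ w →
      w ⊆ x₁ ∪ x₂ → (x₂ \ w).ncard ≤ n → Config CAt.toES (x₁ ∪ x₂) by
    exact h _ x₁ hx₁ subset_rfl Set.subset_union_left le_rfl
  intro n
  induction n with
  | zero =>
    intro w hw hx₁w hwsub hcard
    have hfin : (x₂ \ w).Finite := hx₂fin.diff
    have hempty : x₂ \ w = ∅ := by rw [← Set.ncard_eq_zero hfin]; omega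
    have hx₂w : x₂ ⊆ w := by
      intro e he
      by_contra hne
      have : e ∈ x₂ \ w := ⟨he, hne⟩
      rw [hempty] at this
      exact this
    have : x₁ ∪ x₂ = w :=
      subset_antisymm (Set.union_subset hx₁w hx₂w) hwsub
    rw [this]
    exact hw
  | succ n ih =>
    intro w hw hx₁w hwsub hcard
    by_cases hfull : x₂ ⊆ w
    · have : x₁ ∪ x₂ = w :=
        subset_antisymm (Set.union_subset hx₁w hfull) hwsub
      rw [this]
      exact hw
    · have hne : (x₂ \ w).Nonempty := by
        rw [Set.not_subset] at hfull
        obtain ⟨e, he, hnot⟩ := hfull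
        exact ⟨e, he, hnot⟩
      obtain ⟨e, hemem, hemin⟩ := exists_minimal CAt.toES (hx₂fin.diff) hne
      obtain ⟨j, et⟩ := e
      have he₂ : (j, et) ∈ x₂ := hemem.1
      have hew : (j, et) ∉ w := hemem.2
      have hex : (j, et) ∉ x := fun h => hew (hx₁w (hsub₁ h))
      have hpole : ccPol At (j, et) = true := by
        rw [← hCAt.2.2]
        exact hpos₂ _ he₂ hex
      -- the mirror event is in x (hence in w)
      have hmle : CAt.le (!j, et) (j, et) := by
        refine (hCAt.1 _ _).mpr (Relation.ReflTransGen.single (Or.inr ?_))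
        exact ⟨rfl, by cases j <;> simp, hpole⟩
      have hm₂ : (!j, et) ∈ x₂ := hx₂.2 he₂ hmle
      have hmx : (!j, et) ∈ x := by
        by_contra hnx
        have := hpos₂ _ hm₂ hnx
        rw [hCAt.2.2, ccPol_flip, hpole] at this
        exact absurd this (by simp)
      have hmw : (!j, et) ∈ w := hx₁w (hsub₁ hmx)
      -- predecessors
      have hpred : ∀ a, At.le a et → a ≠ et → (j, a) ∈ w := by
        intro a hle hne'
        have hja₂ : (j, a) ∈ x₂ := hx₂.2 he₂
          ((hCAt.1 _ _).mpr (Relation.ReflTransGen.single (Or.inl ⟨rfl, hle⟩)))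
        by_contra hjaw
        have := hemin (j, a) ⟨hja₂, hjaw⟩
          ((hCAt.1 _ _).mpr (Relation.ReflTransGen.single (Or.inl ⟨rfl, hle⟩)))
        exact hne' (congrArg Prod.snd this)
      -- image configuration
      have himg : Config A.toES (l '' sideS j w ∪ {l et}) := by
        have hYsub : l '' sideS j w ∪ {l et} ⊆ sideS j (ccMap l '' x₁ ∪ ccMap l '' x₂) := by
          rintro c (⟨a, ha, heq⟩ | hc)
          · have : (j, a) ∈ x₁ ∪ x₂ := hwsub ha
            rcases this with h | h
            · exact Or.inl (mem_ccMap_image.mpr ⟨a, h, heq⟩)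
            · exact Or.inr (mem_ccMap_image.mpr ⟨a, h, heq⟩)
          · rw [hc]
            exact Or.inr (mem_ccMap_image.mpr ⟨et, he₂, rfl⟩)
        refine ⟨A.con_mono hYsub (hUside j).1, ?_⟩
        · rintro d (hd | hd) c hle
          · have h1 : Config A.toES (l '' sideS j w) := hlmap.1.1 _ (side_config hCAt hw j)
            exact Or.inl (h1.2 hd hle)
          · rw [hd] at hle
            set D : Set EAt := {a | a ∈ sideS j x₂ ∧ At.le a et} with hD
            have hDcfg : Config At.toES D := by
              refine ⟨At.con_mono (fun a ha => ha.1) (side_config hCAt hx₂ j).1, ?_⟩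
              intro a ha a' hle'
              exact ⟨(side_config hCAt hx₂ j).2 ha.1 hle', At.le_trans hle' ha.2⟩
            have hetD : et ∈ D := ⟨he₂, At.le_refl _⟩
            have h1 : Config A.toES (l '' D) := hlmap.1.1 _ hDcfg
            have h2 : c ∈ l '' D := h1.2 ⟨et, hetD, rfl⟩ hle
            obtain ⟨a, ⟨haj, hale⟩, heq⟩ := h2
            by_cases hae : a = et
            · rw [hae] at heq
              rw [← heq]
              exact Or.inr rfl
            · exact Or.inl ⟨a, hpred a hale hae, heq⟩
      have hside : Config At.toES (insert et (sideS j w)) :=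
        crux hCAt hlmap hrace hw hmw hew hpole hpred himg
      have hw' : Config CAt.toES (insert (j, et) w) := by
        refine cc_config_insert hCAt hw j et hside ?_ ?_
        · intro hj _
          refine Set.mem_insert_of_mem _ ?_
          rw [hj] at hmw
          exact hmw
        · intro hj _
          refine Set.mem_insert_of_mem _ ?_
          rw [hj] at hmw
          exact hmw
      have hcard' : (x₂ \ insert (j, et) w).ncard ≤ n := by
        have hsubd : x₂ \ insert (j, et) w ⊆ (x₂ \ w) \ {(j, et)} := by
          rintro p ⟨hp, hnp⟩
          exact ⟨⟨hp, fun h => hnp (Set.mem_insert_of_mem _ h)⟩,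
            fun h => hnp (h ▸ Set.mem_insert _ _)⟩
        have h1 := Set.ncard_le_ncard hsubd ((hx₂fin.diff).diff)
        have h2 : ((x₂ \ w) \ {(j, et)}).ncard = (x₂ \ w).ncard - 1 :=
          Set.ncard_diff_singleton_of_mem ⟨he₂, hew⟩
        have h3 : 1 ≤ (x₂ \ w).ncard := Set.ncard_pos (hx₂fin.diff) |>.mpr hne
        omega
      refine ih (insert (j, et) w) hw' (fun p hp => Set.mem_insert_of_mem _ (hx₁w hp)) ?_ hcard'
      rintro p (hp | hp)
      · rw [hp]; exact Or.inr he₂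
      · exact hwsub hp

lemma thin_cc (hCA : IsCopycatOf A CA) (hCAt : IsCopycatOf At CAt)
    (hlmap : IsESPMap At A l) (hrmap : IsESPMap At A r)
    (hmono : ∀ aa aa', l aa = l aa' → r aa = r aa' → aa = aa')
    (hrace : MapPresRaces At A l) :
    ThinFam CA (famOf CAt.toES (ccMap l) (ccMap r)) := by
  intro θ hθ θ₁ hθ₁ θ₂ hθ₂ hext₁ hext₂ hcfg
  obtain ⟨xt, hxt, hrel'⟩ := hθ
  obtain ⟨x1, hx1, hrel1'⟩ := hθ₁
  obtain ⟨x2, hx2, hrel2'⟩ := hθ₂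
  have hrel : θ = relOf (ccMap l) (ccMap r) xt := hrel'
  have hrel1 : θ₁ = relOf (ccMap l) (ccMap r) x1 := hrel1'
  have hrel2 : θ₂ = relOf (ccMap l) (ccMap r) x2 := hrel2'
  have hccpol : ∀ p : Bool × EAt, CA.pol (ccMap l p) = CAt.pol p :=
    (ccMap_espmap hCA hCAt hlmap).2
  have hsub : ∀ (xi : Set (Bool × EAt)) (θi : Rel2 (Bool × EA)),
      θi = relOf (ccMap l) (ccMap r) xi → θ ⊆ θi → xt ⊆ xi := by
    intro xi θi hreli hsubθ
    intro p hp
    have : (ccMap l p, ccMap r p) ∈ θi := hsubθ (by rw [hrel]; exact ⟨p, hp, rfl⟩)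
    rw [hreli] at this
    obtain ⟨q, hq, heq⟩ := this
    have e1 : ccMap l p = ccMap l q := congrArg Prod.fst heq
    have e2 : ccMap r p = ccMap r q := congrArg Prod.snd heq
    rw [ccMono hmono p q e1 e2]
    exact hq
  have hsub1 : xt ⊆ x1 := hsub x1 θ₁ hrel1 hext₁.1
  have hsub2 : xt ⊆ x2 := hsub x2 θ₂ hrel2 hext₂.1
  have hposgen : ∀ (xi : Set (Bool × EAt)) (θi : Rel2 (Bool × EA)),
      θi = relOf (ccMap l) (ccMap r) xi → PosRelExt CA θ θi →
      ∀ e ∈ xi, e ∉ xt → CAt.pol e = true := by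
    intro xi θi hreli hexti e he hnot
    have hpair : (ccMap l e, ccMap r e) ∈ θi := by
      rw [hreli]; exact ⟨e, he, rfl⟩
    have hpairnot : (ccMap l e, ccMap r e) ∉ θ := by
      intro hmem
      rw [hrel] at hmem
      obtain ⟨q, hq, heq⟩ := hmem
      have e1 : ccMap l e = ccMap l q := congrArg Prod.fst heq
      have e2 : ccMap r e = ccMap r q := congrArg Prod.snd heq
      rw [ccMono hmono e q e1 e2] at hnot
      exact hnot hq
    have := (hexti.2 _ hpair hpairnot).1
    rw [← hccpol e]
    exact this
  have hpos1 := hposgen x1 θ₁ hrel1 hext₁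
  have hpos2 := hposgen x2 θ₂ hrel2 hext₂
  have hUcfg : Config CA.toES (ccMap l '' x1 ∪ ccMap l '' x2) := by
    have e1 : rdom θ₁ = ccMap l '' x1 := by rw [hrel1, rdom_relOf]
    have e2 : rdom θ₂ = ccMap l '' x2 := by rw [hrel2, rdom_relOf]
    rw [← e1, ← e2]
    exact hcfg
  have hUnion : Config CAt.toES (x1 ∪ x2) :=
    refl_pos_compat_cc hCA hCAt hlmap hrace xt x1 x2 hxt hx1 hx2 hsub1 hsub2 hpos1 hpos2 hUcfg
  refine ⟨x1 ∪ x2, hUnion, ?_⟩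
  show θ₁ ∪ θ₂ = relOf (ccMap l) (ccMap r) (x1 ∪ x2)
  rw [relOf_union, ← hrel1, ← hrel2]

end Thin

/-- copycat on a thin concurrent game carries a symmetry and is a
∼-strategy. -/
theorem statement10 {EA EAt : Type u} (A : ESP EA) (At : ESP EAt) (l r : EAt → EA)
    (hspan : IsSymSpanESP A At l r)
    (hrace : MapPresRaces At A l)
    (hsubs : HasThinReceptiveSubs A (famOf At.toES l r))
    (CA : ESP (Bool × EA)) (hCA : IsCopycatOf A CA)
    (CAt : ESP (Bool × EAt)) (hCAt : IsCopycatOf At CAt)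
    (Gm : ESP (EA ⊕ EA)) (hGm : IsParESP A.dual A Gm) :
    IsSymSpanESP CA CAt (ccMap l) (ccMap r) ∧
    IsSimStrategy CA (famOf CAt.toES (ccMap l) (ccMap r)) Gm
      (parFam (famOf At.toES l r) (famOf At.toES l r)) ccToGame ∧
    ReflPosCompat CAt CA.toES (ccMap l) := by
  obtain ⟨hspanES, hlmap, hrmap⟩ := hspan
  obtain ⟨hlopen, hropen, hmono, hSid, hSinv, hScomp⟩ := hspanES
  have hcclopen : OpenMap CAt.toES CA.toES (ccMap l) :=
    ccMap_l_open hCA hCAt hlmap hlopen hrace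
  have hccropen : OpenMap CAt.toES CA.toES (ccMap r) :=
    ccMap_r_open hCA hCAt hlmap hrmap hmono hSinv hropen hcclopen
  have hcclesp : IsESPMap CAt CA (ccMap l) := ccMap_espmap hCA hCAt hlmap
  have hccresp : IsESPMap CAt CA (ccMap r) := ccMap_espmap hCA hCAt hrmap
  refine ⟨⟨⟨hcclopen, hccropen, ccMono hmono, ?_, ?_, ?_⟩, hcclesp, hccresp⟩,
    ⟨ccToGame_espmap hCA hGm, famPres_cc hCAt hlmap hrmap hmono,
      ⟨?_, ?_, ?_, ?_, ?_, ?_⟩, ?_,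
      courteous_cc hCA hGm, strongrec_cc hCAt hlmap hrmap hmono hGm,
      thin_cc hCA hCAt hlmap hrmap hmono hrace⟩,
    refl_pos_compat_cc hCA hCAt hlmap hrace⟩
  · exact fun x hx => SCC_id hCA hCAt hlmap hrmap hmono hSid hx
  · exact fun θ hθ => SCC_inv hCAt hlmap hrmap hmono hSinv hθ
  · exact fun θ hθ θ' hθ' h => SCC_comp hCAt hlmap hrmap hmono hScomp hθ hθ' h
  · exact fun θ hθ => famOf_basic hcclesp.1 hccresp.1 hθ
  · exact fun x hx => SCC_id hCA hCAt hlmap hrmap hmono hSid hx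
  · exact fun θ hθ => SCC_inv hCAt hlmap hrmap hmono hSinv hθ
  · exact fun θ hθ θ' hθ' h => SCC_comp hCAt hlmap hrmap hmono hScomp hθ hθ' h
  · exact fun θ hθ x hx _ => famOf_restrict hcclopen.1.2 hθ hx
  · exact fun θ hθ x' hx' hsub => famOf_extend hcclopen hθ hx' hsub
  · exact fun θ hθ => S_polpair hcclesp hccresp hθ
end

section
/- Let σ : S → A be a strategy, i.e. a receptive and courteous map of esps. Then for any x ∈ C(S) with x —⊂ s₁ and x —⊂ s₂ such that pol(s₁) = − or pol(s₂) = −, if σ(x) ∪ {σ(s₁), σ(s₂)} ∈ C(A) then x ∪ {s₁, s₂} ∈ C(S). In particular σ preserves races. -/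
set_option autoImplicit false
set_option maxHeartbeats 1000000

universe u

variable {E F G H : Type u}

private lemma notMemImage {SE AE : Type u} (S : ESP SE) (A : ESP AE) (σ : SE → AE)
    (hmap : IsESPMap S A σ) (x : Set SE) (s : SE) (h : Cov S.toES x s) :
    σ s ∉ σ '' x := by
  rintro ⟨e, he, heq⟩
  have : e = s := hmap.1.2 _ h.2.2 e (Set.mem_insert_of_mem _ he) s (Set.mem_insert _ _) heq
  exact h.2.1 (this ▸ he)

private lemma key11 {SE AE : Type u} (S : ESP SE) (A : ESP AE) (σ : SE → AE)
    (hmap : IsESPMap S A σ) (hrec : Receptive S A σ) (hcourt : Courteous S A σ)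
    (x : Set SE) (s₁ s₂ : SE) (h1 : Cov S.toES x s₁) (h2 : Cov S.toES x s₂)
    (hσne : σ s₁ ≠ σ s₂) (hpol2 : S.pol s₂ = false)
    (hA : Config A.toES (insert (σ s₁) (insert (σ s₂) (σ '' x)))) :
    Config S.toES (insert s₂ (insert s₁ x)) := by
  have hy : Config S.toES (insert s₁ x) := h1.2.2
  have hnm2 : σ s₂ ∉ σ '' x := notMemImage S A σ hmap x s₂ h2
  have hnm1 : σ s₁ ∉ σ '' x := notMemImage S A σ hmap x s₁ h1
  have hcov : Cov A.toES (σ '' (insert s₁ x)) (σ s₂) := by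
    refine ⟨hmap.1.1 _ hy, ?_, ?_⟩
    · rw [Set.image_insert_eq]
      rintro (h | h)
      exacts [hσne h.symm, hnm2 h]
    · rw [Set.image_insert_eq, Set.insert_comm]
      exact hA
  have hpa : A.pol (σ s₂) = false := (hmap.2 s₂).trans hpol2
  obtain ⟨s, ⟨hsc, hse⟩, _⟩ := hrec (insert s₁ x) (σ s₂) hy hcov hpa
  have hss1 : s ≠ s₁ := fun h => hσne (h ▸ hse)
  have hnle : ¬ S.le s₁ s := by
    intro hle
    have himm : Imm S.toES s₁ s := by
      refine ⟨⟨hle, Ne.symm hss1⟩, ?_⟩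
      rintro e'' ⟨hle1, hne1⟩ ⟨hle2, hne2⟩
      have he'' : e'' ∈ insert s (insert s₁ x) :=
        hsc.2.2.2 (Set.mem_insert s _) hle2
      rcases Set.mem_insert_iff.mp he'' with h | h
      · exact hne2 h
      rcases Set.mem_insert_iff.mp h with h | h
      · exact hne1 h.symm
      · exact h1.2.1 (h1.1.2 h hle1)
    have hpols : S.pol s = false := by
      have hq := hmap.2 s
      rw [hse, hpa] at hq
      exact hq.symm
    have hImmA : Imm A.toES (σ s₁) (σ s) := hcourt s₁ s himm (Or.inr hpols)
    have hltA : A.le (σ s₁) (σ s₂) := hse ▸ hImmA.1.1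
    have hc2 : Config A.toES (insert (σ s₂) (σ '' x)) := by
      have := hmap.1.1 _ h2.2.2
      rwa [Set.image_insert_eq] at this
    have hmem : σ s₁ ∈ insert (σ s₂) (σ '' x) :=
      hc2.2 (Set.mem_insert _ _) hltA
    rcases Set.mem_insert_iff.mp hmem with h | h
    · exact hσne h
    · exact hnm1 h
  have hcovxs : Cov S.toES x s := by
    refine ⟨h1.1, fun h => hsc.2.1 (Set.mem_insert_of_mem _ h), ?_, ?_⟩
    · exact S.con_mono (Set.insert_subset_insert (Set.subset_insert _ _)) hsc.2.2.1
    · intro e he e' hle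
      rcases Set.mem_insert_iff.mp he with rfl | he
      · have hmem : e' ∈ insert e (insert s₁ x) :=
          hsc.2.2.2 (Set.mem_insert _ _) hle
        rcases Set.mem_insert_iff.mp hmem with h | h
        · exact Set.mem_insert_iff.mpr (Or.inl h)
        rcases Set.mem_insert_iff.mp h with h | h
        · exact absurd (h ▸ hle) hnle
        · exact Set.mem_insert_of_mem _ h
      · exact Set.mem_insert_of_mem _ (h1.1.2 he hle)
  have hcovA : Cov A.toES (σ '' x) (σ s₂) :=
    ⟨hmap.1.1 x h1.1, hnm2, by
      rw [← Set.image_insert_eq]; exact hmap.1.1 _ h2.2.2⟩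
  obtain ⟨s', _, huniq⟩ := hrec x (σ s₂) h1.1 hcovA hpa
  have hss2 : s = s₂ := (huniq s ⟨hcovxs, hse⟩).trans (huniq s₂ ⟨h2, rfl⟩).symm
  exact hss2 ▸ hsc.2.2

/-- strategies cannot introduce races involving a negative event. -/
theorem statement11 {SE AE : Type u} (S : ESP SE) (A : ESP AE) (σ : SE → AE)
    (hmap : IsESPMap S A σ) (hrec : Receptive S A σ) (hcourt : Courteous S A σ)
    (x : Set SE) (s₁ s₂ : SE) (h1 : Cov S.toES x s₁) (h2 : Cov S.toES x s₂)
    (hpol : S.pol s₁ = false ∨ S.pol s₂ = false)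
    (hA : Config A.toES (insert (σ s₁) (insert (σ s₂) (σ '' x)))) :
    Config S.toES (insert s₁ (insert s₂ x)) := by
  by_cases hne : s₁ = s₂
  · subst hne
    rw [Set.insert_idem]
    exact h1.2.2
  have hσne : σ s₁ ≠ σ s₂ := by
    intro heq
    have hpa : A.pol (σ s₁) = false := by
      rcases hpol with h | h
      · exact (hmap.2 s₁).trans h
      · rw [heq]; exact (hmap.2 s₂).trans h
    have hcovA : Cov A.toES (σ '' x) (σ s₁) :=
      ⟨hmap.1.1 x h1.1, notMemImage S A σ hmap x s₁ h1,
        by rw [← Set.image_insert_eq]; exact hmap.1.1 _ h1.2.2⟩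
    obtain ⟨s', _, huniq⟩ := hrec x (σ s₁) h1.1 hcovA hpa
    exact hne ((huniq s₁ ⟨h1, rfl⟩).trans (huniq s₂ ⟨h2, heq.symm⟩).symm)
  rcases hpol with h | h
  · exact key11 S A σ hmap hrec hcourt x s₂ s₁ h2 h1 (Ne.symm hσne) h
      (by rwa [Set.insert_comm] at hA)
  · have := key11 S A σ hmap hrec hcourt x s₁ s₂ h1 h2 hσne h hA
    rwa [Set.insert_comm] at this
end
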